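/- arXiv:1108.4200 — 10 statements merged into one kernel-verified Lean document; each statement's English description precedes it below -/
import Mathlib

section
/- Let Γ be a group, π : Γ → U(H) a unitary representation of Γ on a complex Hilbert space H, and r : Γ → H a map for which there is a fixed sign ε ∈ {+1, −1} with π_γ(r(γ⁻¹)) = ε·r(γ) for all γ ∈ Γ, and such that for every s ∈ Γ the constant C_s := sup_{δ∈Γ} ‖r(sδ) − π_s(r(δ))‖ is finite. Then for all s, t, γ ∈ Γ one has ‖r(sγt) − π_s(r(γ))‖ ≤ C_s + C_t. -/
/-- For a map `r : Γ → H` that is (anti-)symmetric with respect to a unitary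
representation `π` (with a fixed sign `ε ∈ {1, -1}`) and has finite equivariance defects
`C s`, one has `‖r (s * γ * t) - π s (r γ)‖ ≤ C s + C t` for all `s, t, γ`. -/
theorem array_two_sided_defect_bound
    {Γ H : Type*} [Group Γ] [NormedAddCommGroup H] [InnerProductSpace ℂ H]
    (π : Γ →* (H ≃ₗᵢ[ℂ] H)) (r : Γ → H) (ε : ℝ) (hε : ε = 1 ∨ ε = -1)
    (hsym : ∀ γ : Γ, π γ (r γ⁻¹) = ε • r γ)
    (C : Γ → ℝ) (hC : ∀ s δ : Γ, ‖r (s * δ) - π s (r δ)‖ ≤ C s) :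
    ∀ s t γ : Γ, ‖r (s * γ * t) - π s (r γ)‖ ≤ C s + C t := by
  intro s t γ
  have hε1 : ‖ε‖ = 1 := by rcases hε with h | h <;> simp [h]
  -- Key right-defect bound via symmetry
  have key : ‖r (γ * t) - r γ‖ ≤ C t := by
    have h1 : ‖r (γ * t) - r γ‖ = ‖π t (r (t⁻¹ * γ⁻¹)) - r γ⁻¹‖ := by
      calc ‖r (γ * t) - r γ‖ = ‖ε • (r (γ * t) - r γ)‖ := by
              rw [norm_smul, hε1, one_mul]
        _ = ‖π (γ * t) (r ((γ * t)⁻¹)) - π γ (r γ⁻¹)‖ := by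
              rw [smul_sub, ← hsym (γ * t), ← hsym γ]
        _ = ‖π γ (π t (r (t⁻¹ * γ⁻¹))) - π γ (r γ⁻¹)‖ := by
              rw [mul_inv_rev, map_mul]; rfl
        _ = ‖π γ (π t (r (t⁻¹ * γ⁻¹)) - r γ⁻¹)‖ := by rw [map_sub]
        _ = ‖π t (r (t⁻¹ * γ⁻¹)) - r γ⁻¹‖ := (π γ).norm_map _
    rw [h1]
    have h2 : r γ⁻¹ = r (t * (t⁻¹ * γ⁻¹)) := by group
    rw [h2, norm_sub_rev]
    exact hC t _
  have hA : r (s * γ * t) - π s (r γ)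
      = (r (s * (γ * t)) - π s (r (γ * t))) + π s (r (γ * t) - r γ) := by
    rw [map_sub, mul_assoc]; abel
  calc ‖r (s * γ * t) - π s (r γ)‖
      ≤ ‖r (s * (γ * t)) - π s (r (γ * t))‖ + ‖π s (r (γ * t) - r γ)‖ := by
        rw [hA]; exact norm_add_le _ _
    _ = ‖r (s * (γ * t)) - π s (r (γ * t))‖ + ‖r (γ * t) - r γ‖ := by
        rw [(π s).norm_map]
    _ ≤ C s + C t := add_le_add (hC s _) key
end

section
/- Let Γ be a countable group and λ : Γ → U(ℓ²(Γ)) its left regular representation. Let r : Γ → ℓ²(Γ) be a map for which there is a fixed sign ε ∈ {+1, −1} with λ_γ(r(γ⁻¹)) = ε·r(γ) for all γ ∈ Γ, and such that for every s ∈ Γ the constant C_s := sup_{δ∈Γ} ‖r(sδ) − λ_s(r(δ))‖ is finite. For γ ∈ Γ with r(γ) ≠ 0 and any bounded function f : Γ → ℂ set ⟨μ(γ), f⟩ := ‖r(γ)‖⁻² · Σ_{x∈Γ} f(x)·|r(γ)(x)|². Then for all s, t, γ ∈ Γ with r(γ) ≠ 0 and r(sγt) ≠ 0 and every bounded f : Γ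 → ℂ one has |⟨μ(sγt), f⟩ − ⟨μ(γ), x ↦ f(sx)⟩| ≤ 2(C_s + C_t)·(sup_{x∈Γ} |f(x)|)·(1/‖r(sγt)‖ + 1/‖r(γ)‖). -/
/-- The "measure" `μ(γ)` applied to a bounded function `f : Γ → ℂ`:
`⟨μ(γ), f⟩ = ‖r γ‖⁻² · Σ_x f x · |r γ (x)|²`. -/
noncomputable def muPairing {Γ : Type*} [Group Γ]
    (r : Γ → lp (fun _ : Γ => ℂ) 2) (γ : Γ) (f : Γ → ℂ) : ℂ :=
  ((‖r γ‖ : ℂ) ^ 2)⁻¹ * ∑' x : Γ, f x * ((‖r γ x‖ : ℂ) ^ 2)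


open scoped ComplexConjugate ENNReal NNReal


open scoped ComplexConjugate ENNReal NNReal

section aux
variable {Γ : Type*}

local notation "⟪" x ", " y "⟫" => @inner ℂ _ _ x y

lemma mul_memℓp (f : Γ → ℂ) (B : ℝ) (hf : ∀ x, ‖f x‖ ≤ B)
    (ξ : lp (fun _ : Γ => ℂ) 2) : Memℓp (fun x => f x * ξ x) 2 := by
  apply memℓp_gen
  have hs : Summable fun x => ‖ξ x‖ ^ (2 : ℝ≥0∞).toReal := (lp.memℓp ξ).summable (by norm_num)
  refine Summable.of_nonneg_of_le (fun x => ?_) (fun x => ?_) (hs.mul_left (B ^ (2:ℝ≥0∞).toReal))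
  · positivity
  · have h1 : ‖f x * ξ x‖ ≤ B * ‖ξ x‖ := by
      rw [norm_mul]
      exact mul_le_mul_of_nonneg_right (hf x) (norm_nonneg _)
    have hB : (0:ℝ) ≤ B := le_trans (norm_nonneg _) (hf x)
    calc ‖f x * ξ x‖ ^ (2:ℝ≥0∞).toReal ≤ (B * ‖ξ x‖) ^ (2:ℝ≥0∞).toReal := by
          exact Real.rpow_le_rpow (norm_nonneg _) h1 (by norm_num)
      _ = B ^ (2:ℝ≥0∞).toReal * ‖ξ x‖ ^ (2:ℝ≥0∞).toReal :=
          Real.mul_rpow hB (norm_nonneg _)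

/-- the lp element `x ↦ f x * ξ x`. -/
noncomputable def mulLp (f : Γ → ℂ) (B : ℝ) (hf : ∀ x, ‖f x‖ ≤ B)
    (ξ : lp (fun _ : Γ => ℂ) 2) : lp (fun _ : Γ => ℂ) 2 :=
  ⟨fun x => f x * ξ x, mul_memℓp f B hf ξ⟩

lemma mulLp_norm_le (f : Γ → ℂ) (B : ℝ) (hB : 0 ≤ B) (hf : ∀ x, ‖f x‖ ≤ B)
    (ξ : lp (fun _ : Γ => ℂ) 2) : ‖mulLp f B hf ξ‖ ≤ B * ‖ξ‖ := by
  refine lp.norm_le_of_tsum_le (by norm_num) (by positivity) ?_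
  have hnorm : ‖ξ‖ ^ (2:ℝ≥0∞).toReal = ∑' x, ‖ξ x‖ ^ (2:ℝ≥0∞).toReal :=
    lp.norm_rpow_eq_tsum (by norm_num) ξ
  have hs : Summable fun x => ‖ξ x‖ ^ (2 : ℝ≥0∞).toReal := (lp.memℓp ξ).summable (by norm_num)
  have h2 : (B * ‖ξ‖) ^ (2:ℝ≥0∞).toReal = B ^ (2:ℝ≥0∞).toReal * ∑' x, ‖ξ x‖ ^ (2:ℝ≥0∞).toReal := by
    rw [Real.mul_rpow hB (norm_nonneg _), hnorm]
  rw [h2, ← tsum_mul_left]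
  refine Summable.tsum_le_tsum (fun x => ?_) ?_ (hs.mul_left _)
  · show ‖f x * ξ x‖ ^ (2:ℝ≥0∞).toReal ≤ _
    calc ‖f x * ξ x‖ ^ (2:ℝ≥0∞).toReal ≤ (B * ‖ξ x‖) ^ (2:ℝ≥0∞).toReal := by
          refine Real.rpow_le_rpow (norm_nonneg _) ?_ (by norm_num)
          rw [norm_mul]
          exact mul_le_mul_of_nonneg_right (hf x) (norm_nonneg _)
      _ = B ^ (2:ℝ≥0∞).toReal * ‖ξ x‖ ^ (2:ℝ≥0∞).toReal := Real.mul_rpow hB (norm_nonneg _)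
  · exact ((mul_memℓp f B hf ξ)).summable (by norm_num)

lemma inner_mulLp (f : Γ → ℂ) (B : ℝ) (hf : ∀ x, ‖f x‖ ≤ B)
    (η ξ : lp (fun _ : Γ => ℂ) 2) :
    ⟪η, mulLp f B hf ξ⟫ = ∑' x, f x * (conj (η x) * ξ x) := by
  rw [lp.inner_eq_tsum]
  congr 1
  ext x
  show inner ℂ (η x) (f x * ξ x) = _
  rw [RCLike.inner_apply]
  ring

/-- Core estimate. -/
lemma key_estimate (f : Γ → ℂ) (B : ℝ) (hB : 0 ≤ B) (hf : ∀ x, ‖f x‖ ≤ B)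
    (u v : lp (fun _ : Γ => ℂ) 2) :
    ‖(∑' x, f x * ((‖u x‖ : ℂ)) ^ 2) - ∑' x, f x * ((‖v x‖ : ℂ)) ^ 2‖ ≤
      B * ‖u‖ * ‖u - v‖ + B * ‖v‖ * ‖u - v‖ := by
  have hu : (∑' x, f x * ((‖u x‖ : ℂ)) ^ 2) = ⟪u, mulLp f B hf u⟫ := by
    rw [inner_mulLp]
    congr 1; ext x
    rw [RCLike.conj_mul]
    norm_cast
  have hv : (∑' x, f x * ((‖v x‖ : ℂ)) ^ 2) = ⟪v, mulLp f B hf v⟫ := by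
    rw [inner_mulLp]
    congr 1; ext x
    rw [RCLike.conj_mul]
    norm_cast
  have hWsub : mulLp f B hf u - mulLp f B hf v = mulLp f B hf (u - v) := by
    ext x
    simp only [mulLp, lp.coeFn_sub, Pi.sub_apply]
    show f x * u x - f x * v x = f x * (u - v) x
    rw [lp.coeFn_sub, Pi.sub_apply]
    ring
  have hsplit : ⟪u, mulLp f B hf u⟫ - ⟪v, mulLp f B hf v⟫ =
      ⟪u - v, mulLp f B hf u⟫ + ⟪v, mulLp f B hf (u - v)⟫ := by
    rw [← hWsub, inner_sub_left, inner_sub_right]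
    ring
  rw [hu, hv, hsplit]
  refine le_trans (norm_add_le _ _) (add_le_add ?_ ?_)
  · calc ‖⟪u - v, mulLp f B hf u⟫‖ ≤ ‖u - v‖ * ‖mulLp f B hf u‖ := norm_inner_le_norm _ _
      _ ≤ ‖u - v‖ * (B * ‖u‖) :=
        mul_le_mul_of_nonneg_left (mulLp_norm_le f B hB hf u) (norm_nonneg _)
      _ = B * ‖u‖ * ‖u - v‖ := by ring
  · calc ‖⟪v, mulLp f B hf (u - v)⟫‖ ≤ ‖v‖ * ‖mulLp f B hf (u - v)‖ := norm_inner_le_norm _ _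
      _ ≤ ‖v‖ * (B * ‖u - v‖) :=
        mul_le_mul_of_nonneg_left (mulLp_norm_le f B hB hf (u - v)) (norm_nonneg _)
      _ = B * ‖v‖ * ‖u - v‖ := by ring

end aux

lemma normalize_sub_le {E : Type*} [NormedAddCommGroup E] [NormedSpace ℂ E]
    (u v : E) (hu : u ≠ 0) :
    ‖((‖u‖ : ℂ))⁻¹ • u - ((‖v‖ : ℂ))⁻¹ • v‖ ≤ 2 * ‖u - v‖ / ‖u‖ := by
  have ha : (0:ℝ) < ‖u‖ := norm_pos_iff.mpr hu
  have hdecomp : ((‖u‖ : ℂ))⁻¹ • u - ((‖v‖ : ℂ))⁻¹ • v =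
      ((‖u‖ : ℂ))⁻¹ • (u - v) + (((‖u‖ : ℂ))⁻¹ - ((‖v‖ : ℂ))⁻¹) • v := by
    rw [smul_sub, sub_smul]; abel
  have h1 : ‖((‖u‖ : ℂ))⁻¹ • (u - v)‖ = ‖u - v‖ / ‖u‖ := by
    rw [norm_smul, norm_inv, Complex.norm_real, Real.norm_eq_abs, abs_of_pos ha,
      inv_mul_eq_div]
  have h2 : ‖(((‖u‖ : ℂ))⁻¹ - ((‖v‖ : ℂ))⁻¹) • v‖ ≤ ‖u - v‖ / ‖u‖ := by
    by_cases hv : v = 0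
    · simp [hv]; positivity
    · have hb : (0:ℝ) < ‖v‖ := norm_pos_iff.mpr hv
      have hcast : ((‖u‖ : ℂ))⁻¹ - ((‖v‖ : ℂ))⁻¹ = (((‖u‖⁻¹ - ‖v‖⁻¹ : ℝ)) : ℂ) := by
        push_cast; ring
      rw [norm_smul, hcast, Complex.norm_real, Real.norm_eq_abs]
      have hid : |‖u‖⁻¹ - ‖v‖⁻¹| * ‖v‖ = |‖v‖ - ‖u‖| / ‖u‖ := by
        have e1 : ‖u‖⁻¹ - ‖v‖⁻¹ = (‖v‖ - ‖u‖) / (‖u‖ * ‖v‖) := by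
          field_simp
        rw [e1, abs_div, abs_of_pos (by positivity : (0:ℝ) < ‖u‖ * ‖v‖)]
        field_simp
      rw [hid]
      gcongr
      rw [abs_sub_comm]
      exact abs_norm_sub_norm_le u v
  calc ‖((‖u‖ : ℂ))⁻¹ • u - ((‖v‖ : ℂ))⁻¹ • v‖
      = ‖((‖u‖ : ℂ))⁻¹ • (u - v) + (((‖u‖ : ℂ))⁻¹ - ((‖v‖ : ℂ))⁻¹) • v‖ := by rw [hdecomp]
    _ ≤ ‖((‖u‖ : ℂ))⁻¹ • (u - v)‖ + ‖(((‖u‖ : ℂ))⁻¹ - ((‖v‖ : ℂ))⁻¹) • v‖ := norm_add_le _ _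
    _ ≤ ‖u - v‖ / ‖u‖ + ‖u - v‖ / ‖u‖ := by rw [h1]; exact add_le_add_right h2 _
    _ = 2 * ‖u - v‖ / ‖u‖ := by ring

lemma normalize_sub_le' {E : Type*} [NormedAddCommGroup E] [NormedSpace ℂ E]
    (u v : E) (hu : u ≠ 0) (hv : v ≠ 0) :
    ‖((‖u‖ : ℂ))⁻¹ • u - ((‖v‖ : ℂ))⁻¹ • v‖ ≤ ‖u - v‖ * (1 / ‖u‖ + 1 / ‖v‖) := by
  have ha : (0:ℝ) < ‖u‖ := norm_pos_iff.mpr hu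
  have hb : (0:ℝ) < ‖v‖ := norm_pos_iff.mpr hv
  rcases le_total ‖u‖ ‖v‖ with h | h
  · calc ‖((‖u‖ : ℂ))⁻¹ • u - ((‖v‖ : ℂ))⁻¹ • v‖
        = ‖((‖v‖ : ℂ))⁻¹ • v - ((‖u‖ : ℂ))⁻¹ • u‖ := (norm_sub_rev _ _)
      _ ≤ 2 * ‖v - u‖ / ‖v‖ := normalize_sub_le v u hv
      _ = ‖u - v‖ / ‖v‖ + ‖u - v‖ / ‖v‖ := by rw [norm_sub_rev]; ring
      _ ≤ ‖u - v‖ / ‖u‖ + ‖u - v‖ / ‖v‖ := by gcongr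
      _ = ‖u - v‖ * (1 / ‖u‖ + 1 / ‖v‖) := by ring
  · calc ‖((‖u‖ : ℂ))⁻¹ • u - ((‖v‖ : ℂ))⁻¹ • v‖
        ≤ 2 * ‖u - v‖ / ‖u‖ := normalize_sub_le u v hu
      _ = ‖u - v‖ / ‖u‖ + ‖u - v‖ / ‖u‖ := by ring
      _ ≤ ‖u - v‖ / ‖u‖ + ‖u - v‖ / ‖v‖ := by gcongr
      _ = ‖u - v‖ * (1 / ‖u‖ + 1 / ‖v‖) := by ring

lemma muPairing_def {Γ : Type*} [Group Γ]
    (r : Γ → lp (fun _ : Γ => ℂ) 2) (γ : Γ) (f : Γ → ℂ) :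
    muPairing r γ f = ((‖r γ‖ : ℂ) ^ 2)⁻¹ * ∑' x : Γ, f x * ((‖r γ x‖ : ℂ) ^ 2) := rfl

set_option maxHeartbeats 1000000 in
/-- the almost-equivariance estimate for the measures `μ(γ)` associated with an
(anti-)symmetric map `r : Γ → ℓ²(Γ)` with finite equivariance defects, with respect to the
left regular representation. -/
theorem mu_almost_equivariant
    {Γ : Type*} [Group Γ] [Countable Γ]
    (lam : Γ →* (lp (fun _ : Γ => ℂ) 2 ≃ₗᵢ[ℂ] lp (fun _ : Γ => ℂ) 2))
    (hreg : ∀ (g : Γ) (ξ : lp (fun _ : Γ => ℂ) 2) (x : Γ), lam g ξ x = ξ (g⁻¹ * x))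
    (r : Γ → lp (fun _ : Γ => ℂ) 2) (ε : ℝ) (hε : ε = 1 ∨ ε = -1)
    (hsym : ∀ γ : Γ, lam γ (r γ⁻¹) = ε • r γ)
    (C : Γ → ℝ) (hC : ∀ s δ : Γ, ‖r (s * δ) - lam s (r δ)‖ ≤ C s)
    (s t γ : Γ) (hγ : r γ ≠ 0) (hsγt : r (s * γ * t) ≠ 0)
    (f : Γ → ℂ) (B : ℝ) (hf : ∀ x : Γ, ‖f x‖ ≤ B) :
    ‖muPairing r (s * γ * t) f - muPairing r γ (fun x => f (s * x))‖ ≤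
      2 * (C s + C t) * B * (1 / ‖r (s * γ * t)‖ + 1 / ‖r γ‖) := by
  have hB : (0:ℝ) ≤ B := le_trans (norm_nonneg _) (hf 1)
  set u : lp (fun _ : Γ => ℂ) 2 := r (s * γ * t) with hu_def
  set v : lp (fun _ : Γ => ℂ) 2 := lam s (r γ) with hv_def
  have hvne : v ≠ 0 := by
    intro h
    exact hγ ((lam s).map_eq_zero_iff.mp h)
  have hva : ‖v‖ = ‖r γ‖ := (lam s).norm_map (r γ)
  have ha : (0:ℝ) < ‖u‖ := norm_pos_iff.mpr hsγt
  have hb : (0:ℝ) < ‖r γ‖ := norm_pos_iff.mpr hγ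
  -- Step C : ‖u - v‖ ≤ C s + C t
  have hC1 : ‖u - lam s (r (γ * t))‖ ≤ C s := by
    have h := hC s (γ * t)
    rwa [← mul_assoc] at h
  have hC2 : ‖r γ - r (γ * t)‖ ≤ C t := by
    have e1 := hC t (t⁻¹ * γ⁻¹)
    rw [mul_inv_cancel_left] at e1
    have e2 : ‖lam γ (r γ⁻¹) - lam γ (lam t (r (t⁻¹ * γ⁻¹)))‖ ≤ C t := by
      rw [← map_sub, (lam γ).norm_map]
      exact e1
    have e3 : lam γ (lam t (r (t⁻¹ * γ⁻¹))) = ε • r (γ * t) := by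
      have e4 : lam γ (lam t (r (t⁻¹ * γ⁻¹))) = lam (γ * t) (r (t⁻¹ * γ⁻¹)) := by
        rw [map_mul]; rfl
      rw [e4, show t⁻¹ * γ⁻¹ = (γ * t)⁻¹ from (mul_inv_rev γ t).symm]
      exact hsym (γ * t)
    rw [hsym γ, e3, ← smul_sub] at e2
    rcases hε with h1 | h1
    · rwa [h1, one_smul] at e2
    · rw [h1, neg_one_smul, norm_neg] at e2
      exact e2
  have hCtot : ‖u - v‖ ≤ C s + C t := by
    have h3 : ‖lam s (r (γ * t)) - v‖ ≤ C t := by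
      rw [hv_def, ← map_sub, (lam s).norm_map, norm_sub_rev]
      exact hC2
    have htri := dist_triangle u (lam s (r (γ * t))) v
    simp only [dist_eq_norm] at htri
    linarith
  -- normalized vectors
  set U : lp (fun _ : Γ => ℂ) 2 := ((‖u‖ : ℂ))⁻¹ • u with hU_def
  set V : lp (fun _ : Γ => ℂ) 2 := ((‖v‖ : ℂ))⁻¹ • v with hV_def
  have hUV : ‖U - V‖ ≤ (C s + C t) * (1 / ‖u‖ + 1 / ‖r γ‖) := by
    calc ‖U - V‖ ≤ ‖u - v‖ * (1 / ‖u‖ + 1 / ‖v‖) := normalize_sub_le' u v hsγt hvne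
      _ ≤ (C s + C t) * (1 / ‖u‖ + 1 / ‖v‖) := by
          refine mul_le_mul_of_nonneg_right hCtot ?_
          rw [hva]; positivity
      _ = (C s + C t) * (1 / ‖u‖ + 1 / ‖r γ‖) := by rw [hva]
  have hUnorm : ‖U‖ = 1 := by
    rw [hU_def, norm_smul, norm_inv, Complex.norm_real, Real.norm_eq_abs, abs_of_pos ha,
      inv_mul_cancel₀ ha.ne']
  have hVnorm : ‖V‖ = 1 := by
    have hvb : (0:ℝ) < ‖v‖ := hva ▸ hb
    rw [hV_def, norm_smul, norm_inv, Complex.norm_real, Real.norm_eq_abs, abs_of_pos hvb,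
      inv_mul_cancel₀ hvb.ne']
  -- Step A
  have hA : muPairing r (s * γ * t) f = ∑' x, f x * ((‖U x‖ : ℂ)) ^ 2 := by
    have hterm : ∀ x, f x * ((‖U x‖ : ℂ)) ^ 2 =
        ((‖u‖ : ℂ) ^ 2)⁻¹ * (f x * ((‖u x‖ : ℂ)) ^ 2) := by
      intro x
      have hUx : U x = ((‖u‖ : ℂ))⁻¹ * u x := by
        rw [hU_def, lp.coeFn_smul, Pi.smul_apply, smul_eq_mul]
      rw [hUx, norm_mul, norm_inv, Complex.norm_real, Real.norm_eq_abs, abs_of_pos ha]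
      push_cast
      ring
    rw [muPairing_def]
    calc ((‖u‖ : ℂ) ^ 2)⁻¹ * ∑' x, f x * ((‖u x‖ : ℂ)) ^ 2
      _ = ∑' x, ((‖u‖ : ℂ) ^ 2)⁻¹ * (f x * ((‖u x‖ : ℂ)) ^ 2) := by exact tsum_mul_left.symm
      _ = ∑' x, f x * ((‖U x‖ : ℂ)) ^ 2 := by exact tsum_congr fun x => (hterm x).symm
  -- Step B
  have hB2 : muPairing r γ (fun x => f (s * x)) = ∑' x, f x * ((‖V x‖ : ℂ)) ^ 2 := by
    have hVx : ∀ x, V x = ((‖r γ‖ : ℂ))⁻¹ * r γ (s⁻¹ * x) := by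
      intro x
      rw [hV_def, lp.coeFn_smul, Pi.smul_apply, smul_eq_mul, hva]
      congr 1
      exact hreg s (r γ) x
    have hterm : ∀ x, f x * ((‖V x‖ : ℂ)) ^ 2 =
        ((‖r γ‖ : ℂ) ^ 2)⁻¹ * (f x * ((‖r γ (s⁻¹ * x)‖ : ℂ)) ^ 2) := by
      intro x
      rw [hVx x, norm_mul, norm_inv, Complex.norm_real, Real.norm_eq_abs, abs_of_pos hb]
      push_cast
      ring
    rw [muPairing_def]
    calc ((‖r γ‖ : ℂ) ^ 2)⁻¹ * ∑' y, f (s * y) * ((‖r γ y‖ : ℂ)) ^ 2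
      _ = ((‖r γ‖ : ℂ) ^ 2)⁻¹ * ∑' x, f x * ((‖r γ (s⁻¹ * x)‖ : ℂ)) ^ 2 := by
          congr 1
          rw [← (Equiv.mulLeft s).tsum_eq (fun x => f x * ((‖r γ (s⁻¹ * x)‖ : ℂ)) ^ 2)]
          refine tsum_congr fun y => ?_
          have he : (Equiv.mulLeft s) y = s * y := rfl
          rw [he, inv_mul_cancel_left]
      _ = ∑' x, ((‖r γ‖ : ℂ) ^ 2)⁻¹ * (f x * ((‖r γ (s⁻¹ * x)‖ : ℂ)) ^ 2) := by exact tsum_mul_left.symm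
      _ = ∑' x, f x * ((‖V x‖ : ℂ)) ^ 2 := by exact tsum_congr fun x => (hterm x).symm
  -- Conclusion
  rw [hA, hB2]
  calc ‖(∑' x, f x * ((‖U x‖ : ℂ)) ^ 2) - ∑' x, f x * ((‖V x‖ : ℂ)) ^ 2‖
      ≤ B * ‖U‖ * ‖U - V‖ + B * ‖V‖ * ‖U - V‖ := key_estimate f B hB hf U V
    _ = 2 * B * ‖U - V‖ := by rw [hUnorm, hVnorm]; ring
    _ ≤ 2 * B * ((C s + C t) * (1 / ‖u‖ + 1 / ‖r γ‖)) := by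
        refine mul_le_mul_of_nonneg_left hUV (by positivity)
    _ = 2 * (C s + C t) * B * (1 / ‖u‖ + 1 / ‖r γ‖) := by ring
end

section
/- Let Γ be a countable group, 𝒢 a family of subgroups of Γ, λ : Γ → U(ℓ²(Γ)) the left regular representation, and r : Γ → ℓ²(Γ) an array relative to 𝒢 (with some sign ε ∈ {+1, −1}) for λ. For γ ∈ Γ with r(γ) ≠ 0 and bounded f : Γ → ℂ set ⟨μ(γ), f⟩ := ‖r(γ)‖⁻² · Σ_{x∈Γ} f(x)·|r(γ)(x)|². Then for all s, t ∈ Γ and every ε' > 0 there exist a finite subfamily ℱ ⊆ 𝒢 and finite subsets H, K ⊆ Γ such that for every γ ∉ ⋃_{Σ∈ℱ} H·Σ·K one has r(γ) ≠ 0, r(sγt) ≠ 0, and sup{ |⟨μ(sγt), f⟩ − ⟨μ(γ), x ↦ f(sx)⟩| : f : Γ → ℂ with sup_x |f(x)| ≤ 1 } < ε'. -/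
/-- A map `r : Γ → H` is an *array relative to the family `G` of subgroups* (with sign
`ε ∈ {1, -1}`) for a unitary representation `π : Γ → U(H)` if it is (anti-)symmetric,
has finite equivariance defects, and is proper relative to `G`: every sublevel set
`{γ : ‖r γ‖ ≤ C}` is contained in a finite union of sets `h·Σ·k` with `Σ ∈ G`. -/
def IsRelativeArray {Γ H : Type*} [Group Γ] [NormedAddCommGroup H] [InnerProductSpace ℂ H]
    (π : Γ →* (H ≃ₗᵢ[ℂ] H)) (G : Set (Subgroup Γ)) (ε : ℝ) (r : Γ → H) : Prop :=
  (ε = 1 ∨ ε = -1) ∧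
  (∀ γ : Γ, π γ (r γ⁻¹) = ε • r γ) ∧
  (∀ γ : Γ, ∃ C : ℝ, ∀ δ : Γ, ‖r (γ * δ) - π γ (r δ)‖ ≤ C) ∧
  (∀ C : ℝ, 0 < C → ∃ (F : Finset (Subgroup Γ)) (S T : Finset Γ),
    (F : Set (Subgroup Γ)) ⊆ G ∧
    ∀ γ : Γ, ‖r γ‖ ≤ C → ∃ Sg ∈ F, ∃ h ∈ S, ∃ k ∈ T, ∃ σ ∈ Sg, γ = h * σ * k)

open scoped ComplexConjugate ENNReal

section ArrayHelpers
variable {Γ : Type*}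


lemma memtwo {f g : Γ → ℂ} (hg : Memℓp g 2) (h : ∀ x, ‖f x‖ ≤ ‖g x‖) : Memℓp f 2 := by
  apply memℓp_gen
  have hs := hg.summable (p := 2) (by norm_num)
  refine hs.of_nonneg_of_le (fun i => by positivity) (fun i => ?_)
  exact Real.rpow_le_rpow (norm_nonneg _) (h i) (by norm_num)

lemma normtwo {u v : lp (fun _ : Γ => ℂ) 2} (h : ∀ x, ‖u x‖ ≤ ‖v x‖) : ‖u‖ ≤ ‖v‖ := by
  have h2 : (0:ℝ) < (2 : ℝ≥0∞).toReal := by norm_num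
  have hle : ‖u‖ ^ (2:ℝ≥0∞).toReal ≤ ‖v‖ ^ (2:ℝ≥0∞).toReal := by
    rw [lp.norm_rpow_eq_tsum h2 u, lp.norm_rpow_eq_tsum h2 v]
    exact Summable.tsum_le_tsum (fun i => Real.rpow_le_rpow (norm_nonneg _) (h i) (by norm_num))
      ((lp.memℓp u).summable h2) ((lp.memℓp v).summable h2)
  have ht : (2:ℝ≥0∞).toReal = ((2:ℕ):ℝ) := by norm_num
  rw [ht, Real.rpow_natCast, Real.rpow_natCast] at hle
  exact (pow_le_pow_iff_left₀ (norm_nonneg _) (norm_nonneg _) (by norm_num)).mp hle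


noncomputable def cmul (f : Γ → ℂ) (hf : ∀ x, ‖f x‖ ≤ 1) (u : lp (fun _ : Γ => ℂ) 2) :
    lp (fun _ : Γ => ℂ) 2 :=
  ⟨fun x => conj (f x) * u x, by
    apply memℓp_gen
    have hs := (lp.memℓp u).summable (p := 2) (by norm_num : (0:ℝ) < (2:ℝ≥0∞).toReal)
    refine hs.of_nonneg_of_le (fun i => by positivity) (fun i => ?_)
    refine Real.rpow_le_rpow (norm_nonneg _) ?_ (by norm_num)
    calc ‖conj (f i) * u i‖ = ‖f i‖ * ‖u i‖ := by simp
    _ ≤ 1 * ‖u i‖ := by gcongr; exact hf i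
    _ = ‖u i‖ := one_mul _⟩

@[simp] lemma cmul_apply (f : Γ → ℂ) (hf : ∀ x, ‖f x‖ ≤ 1) (u : lp (fun _ : Γ => ℂ) 2) (x : Γ) :
    cmul f hf u x = conj (f x) * u x := rfl

lemma inner_cmul (f : Γ → ℂ) (hf : ∀ x, ‖f x‖ ≤ 1) (u : lp (fun _ : Γ => ℂ) 2) :
    inner (𝕜 := ℂ) (cmul f hf u) u = ∑' x, f x * ((‖u x‖ : ℂ) ^ 2) := by
  rw [lp.inner_eq_tsum]
  congr 1
  ext x
  simp only [cmul_apply, RCLike.inner_apply, map_mul, RingHom.id_apply, starRingEnd_self_apply]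
  rw [mul_left_comm, Complex.mul_conj']

lemma norm_cmul_le (f : Γ → ℂ) (hf : ∀ x, ‖f x‖ ≤ 1) (u : lp (fun _ : Γ => ℂ) 2) :
    ‖cmul f hf u‖ ≤ ‖u‖ := by
  apply normtwo
  intro x
  calc ‖cmul f hf u x‖ = ‖f x‖ * ‖u x‖ := by simp
  _ ≤ 1 * ‖u x‖ := by gcongr; exact hf x
  _ = ‖u x‖ := one_mul _

lemma cmul_sub (f : Γ → ℂ) (hf : ∀ x, ‖f x‖ ≤ 1) (u v : lp (fun _ : Γ => ℂ) 2) :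
    cmul f hf u - cmul f hf v = cmul f hf (u - v) := by
  ext x
  simp only [lp.coeFn_sub, Pi.sub_apply, cmul_apply, mul_sub]

lemma mu_diff_bound (f : Γ → ℂ) (hf : ∀ x, ‖f x‖ ≤ 1) (u v : lp (fun _ : Γ => ℂ) 2)
    (hu : 0 < ‖u‖) (hv : 0 < ‖v‖) :
    ‖((‖u‖ : ℂ) ^ 2)⁻¹ * ∑' x, f x * ((‖u x‖ : ℂ) ^ 2)
      - ((‖v‖ : ℂ) ^ 2)⁻¹ * ∑' x, f x * ((‖v x‖ : ℂ) ^ 2)‖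
      ≤ 2 * (‖u‖ + ‖v‖) * ‖u - v‖ / ‖u‖ ^ 2 := by
  set X : ℂ := inner (𝕜 := ℂ) (cmul f hf u) u with hX
  set Y : ℂ := inner (𝕜 := ℂ) (cmul f hf v) v with hY
  rw [← inner_cmul f hf u, ← inner_cmul f hf v, ← hX, ← hY]
  set A := ‖u‖; set B := ‖v‖; set d := ‖u - v‖
  have hXY : ‖X - Y‖ ≤ (A + B) * d := by
    have h1 : X - Y = inner (𝕜 := ℂ) (cmul f hf u - cmul f hf v) u
        + inner (𝕜 := ℂ) (cmul f hf v) (u - v) := by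
      rw [inner_sub_left, inner_sub_right]; ring
    rw [h1]
    calc ‖_ + _‖ ≤ ‖inner (𝕜 := ℂ) (cmul f hf u - cmul f hf v) u‖
        + ‖inner (𝕜 := ℂ) (cmul f hf v) (u - v)‖ := norm_add_le _ _
    _ ≤ ‖cmul f hf u - cmul f hf v‖ * ‖u‖ + ‖cmul f hf v‖ * ‖u - v‖ := by
        gcongr <;> exact norm_inner_le_norm _ _
    _ ≤ ‖u - v‖ * ‖u‖ + ‖v‖ * ‖u - v‖ := by
        gcongr
        · rw [cmul_sub]; exact norm_cmul_le f hf (u - v)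
        · exact norm_cmul_le f hf v
    _ = (A + B) * d := by ring
  have hYb : ‖Y‖ ≤ B * B := by
    calc ‖Y‖ ≤ ‖cmul f hf v‖ * ‖v‖ := norm_inner_le_norm _ _
    _ ≤ B * B := by gcongr; exact norm_cmul_le f hf v
  have hA2 : ((‖u‖ : ℂ) ^ 2) ≠ 0 := pow_ne_zero 2 (Complex.ofReal_ne_zero.mpr hu.ne')
  have hB2 : ((‖v‖ : ℂ) ^ 2) ≠ 0 := pow_ne_zero 2 (Complex.ofReal_ne_zero.mpr hv.ne')
  have hsplit : ((‖u‖ : ℂ) ^ 2)⁻¹ * X - ((‖v‖ : ℂ) ^ 2)⁻¹ * Y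
      = ((‖u‖ : ℂ) ^ 2)⁻¹ * (X - Y) + (((‖u‖ : ℂ) ^ 2)⁻¹ - ((‖v‖ : ℂ) ^ 2)⁻¹) * Y := by
    ring
  have hnormAinv : ‖((‖u‖ : ℂ) ^ 2)⁻¹‖ = (A ^ 2)⁻¹ := by
    rw [norm_inv, norm_pow, Complex.norm_real, Real.norm_of_nonneg (norm_nonneg u)]
  have hdiffinv : ‖(((‖u‖ : ℂ) ^ 2)⁻¹ - ((‖v‖ : ℂ) ^ 2)⁻¹)‖
      = |B ^ 2 - A ^ 2| / (A ^ 2 * B ^ 2) := by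
    rw [inv_sub_inv hA2 hB2, norm_div, norm_mul, norm_pow, norm_pow,
      Complex.norm_real, Complex.norm_real, Real.norm_of_nonneg (norm_nonneg u),
      Real.norm_of_nonneg (norm_nonneg v)]
    congr 1
    rw [← Complex.ofReal_pow, ← Complex.ofReal_pow, ← Complex.ofReal_sub,
      Complex.norm_real, Real.norm_eq_abs]
  have habs : |B ^ 2 - A ^ 2| ≤ (A + B) * d := by
    have h1 : |A - B| ≤ d := abs_norm_sub_norm_le u v
    have h2 : |B ^ 2 - A ^ 2| = (A + B) * |B - A| := by
      rw [sq_sub_sq, abs_mul, abs_of_nonneg (by positivity : (0:ℝ) ≤ B + A)]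
      ring_nf
    rw [h2, abs_sub_comm]
    exact mul_le_mul_of_nonneg_left h1 (by positivity)
  calc ‖((‖u‖ : ℂ) ^ 2)⁻¹ * X - ((‖v‖ : ℂ) ^ 2)⁻¹ * Y‖
      ≤ ‖((‖u‖ : ℂ) ^ 2)⁻¹‖ * ‖X - Y‖
        + ‖(((‖u‖ : ℂ) ^ 2)⁻¹ - ((‖v‖ : ℂ) ^ 2)⁻¹)‖ * ‖Y‖ := by
        rw [hsplit]
        exact (norm_add_le _ _).trans (by rw [norm_mul, norm_mul])
  _ ≤ (A ^ 2)⁻¹ * ((A + B) * d) + (A + B) * d / (A ^ 2 * B ^ 2) * (B * B) := by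
        rw [hnormAinv, hdiffinv]
        gcongr <;> first | exact hXY | exact habs | exact hYb | positivity
  _ = 2 * (A + B) * d / A ^ 2 := by
        field_simp
        ring

lemma arith_bound (ε' D N A d : ℝ) (hε' : 0 < ε') (hD0 : 0 ≤ D) (hd0 : 0 ≤ d) (hd : d ≤ D)
    (hN : 2 * D + 2 + 48 * D / ε' < N) (hA1 : N - D ≤ A) (hA2 : A ≤ N + D) :
    2 * (A + N) * d / A ^ 2 < ε' := by
  have hq : (0:ℝ) ≤ 48 * D / ε' := by positivity
  have hDN : 2 * D + 2 ≤ N := by linarith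
  have hN0 : 0 < N := by linarith
  have hApos : 0 < A := by linarith
  rw [div_lt_iff₀ (pow_pos hApos 2)]
  have h48 : 48 * D < ε' * N := by
    have h1 : ε' * (2 * D + 2 + 48 * D / ε') < ε' * N := mul_lt_mul_of_pos_left hN hε'
    have h2 : ε' * (2 * D + 2 + 48 * D / ε') = ε' * (2 * D + 2) + 48 * D := by
      field_simp
    nlinarith [mul_nonneg hε'.le (by linarith : (0:ℝ) ≤ 2 * D + 2)]
  have hq1 : 2 * (A + N) * d ≤ 2 * (A + N) * D := by
    apply mul_le_mul_of_nonneg_left hd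
    nlinarith
  have hq2 : 2 * (A + N) * D ≤ 6 * N * D := by
    nlinarith [mul_nonneg hD0 (by linarith : (0:ℝ) ≤ 2 * N - A)]
  have hp : 48 * D * N < ε' * N * N := by
    nlinarith [mul_lt_mul_of_pos_right h48 hN0]
  have hq3 : 6 * N * D < ε' * (N / 2) * (N / 2) := by
    nlinarith [hp, mul_nonneg hD0 hN0.le]
  have hNA : N / 2 ≤ A := by linarith
  have hq4 : ε' * (N / 2) * (N / 2) ≤ ε' * A ^ 2 := by
    nlinarith [mul_le_mul_of_nonneg_left (mul_le_mul hNA hNA (by positivity) hApos.le) hε'.le]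
  linarith

end ArrayHelpers



set_option maxHeartbeats 2000000 in
/-- if `r` is an array relative to `G` for the left regular representation of a
countable group `Γ`, then `‖μ(sγt)(f) − μ(γ)(f(s·))‖ → 0` as `γ → ∞/G`, uniformly over
functions `f` with `sup |f| ≤ 1`. -/
theorem mu_equivariant_at_infinity
    {Γ : Type*} [Group Γ] [Countable Γ]
    (lam : Γ →* (lp (fun _ : Γ => ℂ) 2 ≃ₗᵢ[ℂ] lp (fun _ : Γ => ℂ) 2))
    (hreg : ∀ (g : Γ) (ξ : lp (fun _ : Γ => ℂ) 2) (x : Γ), lam g ξ x = ξ (g⁻¹ * x))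
    (G : Set (Subgroup Γ)) (r : Γ → lp (fun _ : Γ => ℂ) 2) (ε : ℝ)
    (harr : IsRelativeArray lam G ε r) (s t : Γ) (ε' : ℝ) (hε' : 0 < ε') :
    ∃ (F : Finset (Subgroup Γ)) (S T : Finset Γ),
      (F : Set (Subgroup Γ)) ⊆ G ∧
      ∀ γ : Γ, (¬ ∃ Sg ∈ F, ∃ h ∈ S, ∃ k ∈ T, ∃ σ ∈ Sg, γ = h * σ * k) →
        r γ ≠ 0 ∧ r (s * γ * t) ≠ 0 ∧
        ∀ f : Γ → ℂ, (∀ x : Γ, ‖f x‖ ≤ 1) →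
          ‖muPairing r (s * γ * t) f - muPairing r γ (fun x => f (s * x))‖ < ε' := by
  obtain ⟨hsign, hsym, hdef, hproper⟩ := harr
  have hε2 : ε * ε = 1 := by rcases hsign with h | h <;> simp [h]
  have habsε : |ε| = 1 := by rcases hsign with h | h <;> simp [h]
  obtain ⟨Cs, hCs⟩ := hdef s
  obtain ⟨Ct, hCt⟩ := hdef t⁻¹
  have hCs0 : 0 ≤ Cs := le_trans (norm_nonneg _) (hCs 1)
  have hCt0 : 0 ≤ Ct := le_trans (norm_nonneg _) (hCt 1)
  -- right-defect estimate
  have hshift : ∀ γ : Γ, ‖r (γ * t) - r γ‖ ≤ Ct := by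
    intro γ
    have e1 : r (γ * t) = ε • (lam (γ * t)) (r (t⁻¹ * γ⁻¹)) := by
      have h1 := hsym (γ * t)
      rw [mul_inv_rev] at h1
      rw [h1]; rcases hsign with h | h <;> simp [h]
      · exact (one_smul ℝ _).symm
      · exact (by rw [neg_smul, one_smul, neg_neg] : r (γ * t) = -((-1:ℝ) • r (γ * t)))
    have e2 : r γ = ε • (lam (γ * t)) ((lam t⁻¹) (r γ⁻¹)) := by
      have h1 := hsym γ
      have h2 : lam γ = lam (γ * t) * lam t⁻¹ := by
        rw [← map_mul, mul_assoc, mul_inv_cancel, mul_one]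
      have h3 : (lam (γ * t)) ((lam t⁻¹) (r γ⁻¹)) = lam γ (r γ⁻¹) := by rw [h2]; rfl
      rw [h3, h1]; rcases hsign with h | h <;> simp [h]
      · exact (one_smul ℝ _).symm
      · exact (by rw [neg_smul, one_smul, neg_neg] : r γ = -((-1:ℝ) • r γ))
    rw [e1, e2, ← smul_sub, ← map_sub, norm_smul, Real.norm_eq_abs, habsε, one_mul,
      (lam (γ * t)).norm_map]
    exact hCt γ⁻¹
  have hst : ∀ γ : Γ, ‖r (s * γ * t) - lam s (r γ)‖ ≤ Cs + Ct := by
    intro γ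
    have h1 : ‖r (s * (γ * t)) - lam s (r (γ * t))‖ ≤ Cs := hCs (γ * t)
    have h2 : ‖lam s (r (γ * t)) - lam s (r γ)‖ ≤ Ct := by
      rw [← map_sub, (lam s).norm_map]; exact hshift γ
    calc ‖r (s * γ * t) - lam s (r γ)‖
        = ‖(r (s * (γ * t)) - lam s (r (γ * t))) + (lam s (r (γ * t)) - lam s (r γ))‖ := by
          rw [mul_assoc, sub_add_sub_cancel]
    _ ≤ Cs + Ct := (norm_add_le _ _).trans (add_le_add h1 h2)
  set D := Cs + Ct with hD
  have hD0 : 0 ≤ D := by positivity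
  obtain ⟨F, S, T, hFG, hcov⟩ := hproper (2 * D + 2 + 48 * D / ε') (by positivity)
  refine ⟨F, S, T, hFG, fun γ hγ => ?_⟩
  have hN : 2 * D + 2 + 48 * D / ε' < ‖r γ‖ := by
    by_contra h
    push_neg at h
    exact hγ (hcov γ h)
  set N := ‖r γ‖ with hNdef
  have hN0 : 0 < N := lt_trans (by positivity) hN
  have hrγ : r γ ≠ 0 := by
    intro h; rw [hNdef, h, norm_zero] at hN0; exact lt_irrefl 0 hN0
  set u := r (s * γ * t) with hu
  set v := lam s (r γ) with hv
  have hvnorm : ‖v‖ = N := (lam s).norm_map (r γ)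
  have hd : ‖u - v‖ ≤ D := hst γ
  have h48 : 48 * D < ε' * N := by
    have h1 : ε' * (2 * D + 2 + 48 * D / ε') < ε' * N := mul_lt_mul_of_pos_left hN hε'
    have h2 : ε' * (2 * D + 2 + 48 * D / ε') = ε' * (2 * D + 2) + 48 * D := by
      field_simp
    nlinarith [mul_nonneg hε'.le (by linarith : (0:ℝ) ≤ 2 * D + 2)]
  have hDN : 2 * D + 2 ≤ N := by
    have hq : (0:ℝ) ≤ 48 * D / ε' := by positivity
    linarith [hN]
  have hA1 : N - D ≤ ‖u‖ := by
    have htri : ‖v‖ ≤ ‖u‖ + ‖u - v‖ := by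
      calc ‖v‖ = ‖u - (u - v)‖ := by rw [sub_sub_cancel]
      _ ≤ ‖u‖ + ‖u - v‖ := norm_sub_le _ _
    rw [hvnorm] at htri; linarith
  have hupos : 0 < ‖u‖ := by linarith
  have hune : r (s * γ * t) ≠ 0 := by
    intro h; rw [hu, h, norm_zero] at hupos; exact lt_irrefl 0 hupos
  refine ⟨hrγ, hune, fun f hf => ?_⟩
  -- rewrite second muPairing in terms of v
  have hmu2 : muPairing r γ (fun x => f (s * x))
      = ((‖v‖ : ℂ) ^ 2)⁻¹ * ∑' x : Γ, f x * ((‖v x‖ : ℂ) ^ 2) := by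
    rw [muPairing, hvnorm]
    congr 1
    rw [← (Equiv.mulLeft s).tsum_eq (fun x => f x * ((‖v x‖ : ℂ) ^ 2))]
    apply tsum_congr
    intro x
    have hvx : v (s * x) = r γ x := by
      rw [hv, hreg s (r γ) (s * x), inv_mul_cancel_left]
    simp only [Equiv.coe_mulLeft, hvx]
  have hmu1 : muPairing r (s * γ * t) f
      = ((‖u‖ : ℂ) ^ 2)⁻¹ * ∑' x : Γ, f x * ((‖u x‖ : ℂ) ^ 2) := rfl
  rw [hmu1, hmu2]
  have hbound := mu_diff_bound f hf u v hupos (hvnorm ▸ hN0)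
  refine lt_of_le_of_lt hbound ?_
  rw [hvnorm]
  have hA2 : ‖u‖ ≤ N + D := by
    have htri : ‖u‖ ≤ ‖v‖ + ‖u - v‖ := by
      calc ‖u‖ = ‖v + (u - v)‖ := by rw [add_sub_cancel]
      _ ≤ ‖v‖ + ‖u - v‖ := norm_add_le _ _
    rw [hvnorm] at htri; linarith
  exact arith_bound ε' D N ‖u‖ ‖u - v‖ hε' hD0 (norm_nonneg _) hd hN hA1 hA2
end

section
/- Let Γ be a countable group, 𝒢 a family of subgroups of Γ, π : Γ → U(H) a unitary representation, and q : Γ → H a quasi-cocycle relative to 𝒢 with defect D. Then the map r(γ) := (q(γ) − π_γ(q(γ⁻¹)))/2 is an array relative to 𝒢 with sign ε = −1 (antisymmetric) for π, and moreover sup_{γ∈Γ} ‖r(γ) − q(γ)‖ ≤ (D + ‖q(e)‖)/2 < ∞. -/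
/-- A map `q : Γ → H` is a *quasi-cocycle relative to the family `G`* with defect `D` for a
unitary representation `π` if `‖q(γδ) − π_γ(q(δ)) − q(γ)‖ ≤ D` for all `γ, δ` and `q` is
proper relative to `G`. -/
def IsRelativeQuasicocycle {Γ H : Type*} [Group Γ] [NormedAddCommGroup H]
    [InnerProductSpace ℂ H] (π : Γ →* (H ≃ₗᵢ[ℂ] H)) (G : Set (Subgroup Γ)) (D : ℝ)
    (q : Γ → H) : Prop :=
  (∀ γ δ : Γ, ‖q (γ * δ) - π γ (q δ) - q γ‖ ≤ D) ∧
  (∀ C : ℝ, 0 < C → ∃ (F : Finset (Subgroup Γ)) (S T : Finset Γ),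
    (F : Set (Subgroup Γ)) ⊆ G ∧
    ∀ γ : Γ, ‖q γ‖ ≤ C → ∃ Sg ∈ F, ∃ h ∈ S, ∃ k ∈ T, ∃ σ ∈ Sg, γ = h * σ * k)

/-- the antisymmetrization `r(γ) = (q(γ) − π_γ(q(γ⁻¹)))/2` of a quasi-cocycle
`q` relative to `G` with defect `D` is an antisymmetric array relative to `G`, and
`sup_γ ‖r(γ) − q(γ)‖ ≤ (D + ‖q(e)‖)/2`. -/
theorem isRelativeArray_antisymmetrization
    {Γ H : Type*} [Group Γ] [Countable Γ] [NormedAddCommGroup H] [InnerProductSpace ℂ H]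
    (π : Γ →* (H ≃ₗᵢ[ℂ] H)) (G : Set (Subgroup Γ)) (D : ℝ) (q : Γ → H)
    (hq : IsRelativeQuasicocycle π G D q) :
    IsRelativeArray π G (-1) (fun γ => ((2 : ℝ)⁻¹) • (q γ - π γ (q γ⁻¹))) ∧
      ∀ γ : Γ, ‖((2 : ℝ)⁻¹) • (q γ - π γ (q γ⁻¹)) - q γ‖ ≤ (D + ‖q 1‖) / 2 := by
  obtain ⟨hd, hp⟩ := hq
  -- basic helpers
  have hsm : ∀ (γ : Γ) (c : ℝ) (x : H), π γ (c • x) = c • π γ x := fun γ c x =>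
    LinearMap.map_smul_of_tower (π γ).toLinearEquiv.toLinearMap c x
  have hmul : ∀ (γ δ : Γ) (x : H), π (γ * δ) x = π γ (π δ x) := by
    intro γ δ x; rw [map_mul]; rfl
  have hinv : ∀ (γ : Γ) (x : H), π γ (π γ⁻¹ x) = x := by
    intro γ x
    have h : π γ (π γ⁻¹ x) = π (γ * γ⁻¹) x := (hmul γ γ⁻¹ x).symm
    rw [h, mul_inv_cancel, map_one]; rfl
  have hq1 : ‖q 1‖ ≤ D := by
    have h := hd 1 1
    simpa using h
  have hD : 0 ≤ D := le_trans (norm_nonneg _) hq1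
  -- the main norm estimate
  have key : ∀ γ : Γ, ‖((2 : ℝ)⁻¹) • (q γ - π γ (q γ⁻¹)) - q γ‖ ≤ (D + ‖q 1‖) / 2 := by
    intro γ
    have h1 := hd γ γ⁻¹
    rw [mul_inv_cancel] at h1
    have hid : ((2 : ℝ)⁻¹) • (q γ - π γ (q γ⁻¹)) - q γ
        = ((2 : ℝ)⁻¹) • (q 1 - π γ (q γ⁻¹) - q γ) - ((2 : ℝ)⁻¹) • q 1 := by
      module
    rw [hid]
    calc ‖((2 : ℝ)⁻¹) • (q 1 - π γ (q γ⁻¹) - q γ) - ((2 : ℝ)⁻¹) • q 1‖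
        ≤ ‖((2 : ℝ)⁻¹) • (q 1 - π γ (q γ⁻¹) - q γ)‖ + ‖((2 : ℝ)⁻¹) • q 1‖ :=
          norm_sub_le _ _
      _ ≤ (2 : ℝ)⁻¹ * D + (2 : ℝ)⁻¹ * ‖q 1‖ := by
          gcongr ?_ + ?_
          · rw [norm_smul]
            simp only [norm_inv, Real.norm_ofNat]
            have : (0:ℝ) ≤ (2:ℝ)⁻¹ := by positivity
            exact mul_le_mul_of_nonneg_left h1 this
          · rw [norm_smul]; simp
      _ = (D + ‖q 1‖) / 2 := by ring
  refine ⟨⟨Or.inr rfl, ?_, ?_, ?_⟩, key⟩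
  · -- antisymmetry
    intro γ
    simp only [inv_inv]
    rw [hsm, map_sub, hinv]
    module
  · -- bounded defect
    intro γ
    refine ⟨D + (‖q γ‖ + ‖q γ⁻¹‖) / 2, fun δ => ?_⟩
    simp only
    have hA := hd γ δ
    have hB := hd δ⁻¹ γ⁻¹
    have hB' : ‖q (δ⁻¹ * γ⁻¹) - q δ⁻¹‖ ≤ D + ‖q γ⁻¹‖ := by
      have : q (δ⁻¹ * γ⁻¹) - q δ⁻¹
          = (q (δ⁻¹ * γ⁻¹) - π δ⁻¹ (q γ⁻¹) - q δ⁻¹) + π δ⁻¹ (q γ⁻¹) := by abel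
      rw [this]
      refine le_trans (norm_add_le _ _) ?_
      gcongr
      rw [(π δ⁻¹).norm_map]
    have hid : ((2 : ℝ)⁻¹) • (q (γ * δ) - π (γ * δ) (q (γ * δ)⁻¹))
          - π γ (((2 : ℝ)⁻¹) • (q δ - π δ (q δ⁻¹)))
        = ((2 : ℝ)⁻¹) • (q (γ * δ) - π γ (q δ) - q γ) + ((2 : ℝ)⁻¹) • q γ
          - ((2 : ℝ)⁻¹) • π (γ * δ) (q (δ⁻¹ * γ⁻¹) - q δ⁻¹) := by
      rw [hsm, map_sub, ← hmul, mul_inv_rev, map_sub]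
      module
    rw [hid]
    have e1 : ‖((2 : ℝ)⁻¹) • (q (γ * δ) - π γ (q δ) - q γ)‖ ≤ (2 : ℝ)⁻¹ * D := by
      rw [norm_smul]; simp only [norm_inv, Real.norm_ofNat]
      exact mul_le_mul_of_nonneg_left hA (by positivity)
    have e2 : ‖((2 : ℝ)⁻¹) • q γ‖ = (2 : ℝ)⁻¹ * ‖q γ‖ := by rw [norm_smul]; simp
    have e3 : ‖((2 : ℝ)⁻¹) • π (γ * δ) (q (δ⁻¹ * γ⁻¹) - q δ⁻¹)‖ ≤ (2 : ℝ)⁻¹ * (D + ‖q γ⁻¹‖) := by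
      rw [norm_smul, (π (γ * δ)).norm_map]
      simp only [norm_inv, Real.norm_ofNat]
      exact mul_le_mul_of_nonneg_left hB' (by positivity)
    calc ‖((2 : ℝ)⁻¹) • (q (γ * δ) - π γ (q δ) - q γ) + ((2 : ℝ)⁻¹) • q γ
          - ((2 : ℝ)⁻¹) • π (γ * δ) (q (δ⁻¹ * γ⁻¹) - q δ⁻¹)‖
        ≤ ‖((2 : ℝ)⁻¹) • (q (γ * δ) - π γ (q δ) - q γ) + ((2 : ℝ)⁻¹) • q γ‖
          + ‖((2 : ℝ)⁻¹) • π (γ * δ) (q (δ⁻¹ * γ⁻¹) - q δ⁻¹)‖ := norm_sub_le _ _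
      _ ≤ (‖((2 : ℝ)⁻¹) • (q (γ * δ) - π γ (q δ) - q γ)‖ + ‖((2 : ℝ)⁻¹) • q γ‖)
          + ‖((2 : ℝ)⁻¹) • π (γ * δ) (q (δ⁻¹ * γ⁻¹) - q δ⁻¹)‖ := by
            gcongr; exact norm_add_le _ _
      _ ≤ ((2 : ℝ)⁻¹ * D + (2 : ℝ)⁻¹ * ‖q γ‖) + (2 : ℝ)⁻¹ * (D + ‖q γ⁻¹‖) := by
            rw [e2]; gcongr
      _ = D + (‖q γ‖ + ‖q γ⁻¹‖) / 2 := by ring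
  · -- properness
    intro C hC
    have hK : 0 ≤ (D + ‖q 1‖) / 2 := by positivity
    obtain ⟨F, S, T, hsub, hcov⟩ := hp (C + (D + ‖q 1‖) / 2) (by linarith)
    refine ⟨F, S, T, hsub, fun γ hγ => ?_⟩
    apply hcov
    have h2 := key γ
    have hid2 : ((2 : ℝ)⁻¹) • (q γ - π γ (q γ⁻¹))
        - (((2 : ℝ)⁻¹) • (q γ - π γ (q γ⁻¹)) - q γ) = q γ := by abel
    calc ‖q γ‖ = ‖((2 : ℝ)⁻¹) • (q γ - π γ (q γ⁻¹))
          - (((2 : ℝ)⁻¹) • (q γ - π γ (q γ⁻¹)) - q γ)‖ := by rw [hid2]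
      _ ≤ ‖((2 : ℝ)⁻¹) • (q γ - π γ (q γ⁻¹))‖
          + ‖((2 : ℝ)⁻¹) • (q γ - π γ (q γ⁻¹)) - q γ‖ := norm_sub_le _ _
      _ ≤ C + (D + ‖q 1‖) / 2 := add_le_add hγ h2
end

section
/- Let Γ be a group, π : Γ → U(H) a unitary representation, and q : Γ → H a map for which there is a fixed sign ε ∈ {+1, −1} with π_γ(q(γ⁻¹)) = ε·q(γ) for all γ ∈ Γ. Let Λ ≤ Γ be a subgroup, S ⊆ Λ a finite symmetric subset (S = S⁻¹), and K > 0 a constant such that (a) ‖ξ‖ ≤ K·Σ_{s∈S} ‖π_s(ξ) − ξ‖ for every ξ ∈ H, and (b) ‖q(sγ) − π_s(q(γ))‖ ≤ K for all s ∈ S and γ ∈ Γ. Then ‖q(γ)‖ ≤ 2K²·|S| for every γ in the centralizer C_Γ(Λ) = {γ ∈ Γ : γλ = λγ for all λ ∈ Λ}. -/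
/-- if `q : Γ → H` is (anti-)symmetric for a unitary representation `π`, `Λ` is
a subgroup whose restriction of `π` has spectral gap with constant `K` over a finite symmetric
set `S ⊆ Λ`, and the equivariance defect of `q` over `S` is at most `K`, then
`‖q(γ)‖ ≤ 2K²|S|` for every `γ` in the centralizer of `Λ`. -/
theorem array_bounded_on_centralizer
    {Γ H : Type*} [Group Γ] [NormedAddCommGroup H] [InnerProductSpace ℂ H]
    (π : Γ →* (H ≃ₗᵢ[ℂ] H)) (q : Γ → H) (ε : ℝ) (hε : ε = 1 ∨ ε = -1)
    (hsym : ∀ γ : Γ, π γ (q γ⁻¹) = ε • q γ)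
    (Λ : Subgroup Γ) (S : Finset Γ) (hSΛ : ∀ s ∈ S, s ∈ Λ) (hSsymm : ∀ s ∈ S, s⁻¹ ∈ S)
    (K : ℝ) (hK : 0 < K)
    (hgap : ∀ ξ : H, ‖ξ‖ ≤ K * ∑ s ∈ S, ‖π s ξ - ξ‖)
    (hdef : ∀ s ∈ S, ∀ γ : Γ, ‖q (s * γ) - π s (q γ)‖ ≤ K) :
    ∀ γ : Γ, (∀ l ∈ Λ, γ * l = l * γ) → ‖q γ‖ ≤ 2 * K ^ 2 * S.card := by
  intro γ hγ
  have habs : |ε| = 1 := by rcases hε with h | h <;> simp [h]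
  have hq : ∀ δ : Γ, q δ = ε • π δ (q δ⁻¹) := by
    intro δ
    rw [hsym δ, smul_smul]
    rcases hε with h | h <;> simp [h]
  have key : ∀ s ∈ S, ‖π s (q γ) - q γ‖ ≤ 2 * K := by
    intro s hs
    have hcomm : γ * s = s * γ := hγ s (hSΛ s hs)
    have h1 : ‖q (s * γ) - π s (q γ)‖ ≤ K := hdef s hs γ
    have h2 : ‖q (s * γ) - q γ‖ ≤ K := by
      have e1 : q (s * γ) - q γ = ε • (π γ (π s (q (s⁻¹ * γ⁻¹)) - q γ⁻¹)) := by
        rw [← hcomm, hq (γ * s), hq γ, ← smul_sub, map_sub]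
        congr 2
        rw [mul_inv_rev, map_mul]
        rfl
      have e2 : q γ⁻¹ = q (s * (s⁻¹ * γ⁻¹)) := by
        rw [← mul_assoc, mul_inv_cancel, one_mul]
      calc ‖q (s * γ) - q γ‖ = ‖π s (q (s⁻¹ * γ⁻¹)) - q γ⁻¹‖ := by
            rw [e1, norm_smul, (π γ).norm_map, Real.norm_eq_abs, habs, one_mul]
        _ = ‖q (s * (s⁻¹ * γ⁻¹)) - π s (q (s⁻¹ * γ⁻¹))‖ := by
            rw [← e2, norm_sub_rev]
        _ ≤ K := hdef s hs (s⁻¹ * γ⁻¹)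
    calc ‖π s (q γ) - q γ‖ ≤ ‖π s (q γ) - q (s * γ)‖ + ‖q (s * γ) - q γ‖ := by
          simpa using norm_sub_le_norm_sub_add_norm_sub (π s (q γ)) (q (s * γ)) (q γ)
      _ ≤ K + K := by
          refine add_le_add ?_ h2
          rw [norm_sub_rev]; exact h1
      _ = 2 * K := by ring
  have hsum : ∑ s ∈ S, ‖π s (q γ) - q γ‖ ≤ S.card * (2 * K) := by
    simpa using Finset.sum_le_card_nsmul S _ (2 * K) key
  calc ‖q γ‖ ≤ K * ∑ s ∈ S, ‖π s (q γ) - q γ‖ := hgap (q γ)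
    _ ≤ K * (S.card * (2 * K)) := by
        exact mul_le_mul_of_nonneg_left hsum hK.le
    _ = 2 * K ^ 2 * S.card := by ring
end

section
/- Let Γ be a countable group, 𝒢 a family of subgroups of Γ, π : Γ → U(H) a unitary representation, and suppose there exists an array q on Γ relative to 𝒢 (with some sign ε ∈ {+1, −1}) for π. Let Λ ≤ Γ be a subgroup such that there exist a finite symmetric subset S ⊆ Λ and a constant K > 0 with ‖ξ‖ ≤ K·Σ_{s∈S} ‖π_s(ξ) − ξ‖ for every ξ ∈ H. Then there exist h ∈ Γ and Σ ∈ 𝒢 such that the subgroup hΣh⁻¹ ∩ C_Γ(Λ) has finite index in the centralizer C_Γ(Λ). -/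
open Pointwise


/-- if `Γ` admits an array relative to `G` into `π` and `Λ ≤ Γ` has spectral gap
for `π` over a finite symmetric subset `S ⊆ Λ`, then there are `h ∈ Γ` and `Σ ∈ G` such that
`hΣh⁻¹ ∩ C_Γ(Λ)` has finite index in the centralizer `C_Γ(Λ)`. -/
theorem centralizer_virtually_in_conjugate
    {Γ H : Type*} [Group Γ] [Countable Γ] [NormedAddCommGroup H] [InnerProductSpace ℂ H]
    (π : Γ →* (H ≃ₗᵢ[ℂ] H)) (G : Set (Subgroup Γ)) (ε : ℝ) (q : Γ → H)
    (harr : IsRelativeArray π G ε q)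
    (Λ : Subgroup Γ) (S : Finset Γ) (hSΛ : ∀ s ∈ S, s ∈ Λ) (hSsymm : ∀ s ∈ S, s⁻¹ ∈ S)
    (K : ℝ) (hK : 0 < K)
    (hgap : ∀ ξ : H, ‖ξ‖ ≤ K * ∑ s ∈ S, ‖π s ξ - ξ‖) :
    ∃ (h : Γ) (Sg : Subgroup Γ), Sg ∈ G ∧
      (Sg.map (MulAut.conj h).toMonoidHom).relIndex
        (Subgroup.centralizer (Λ : Set Γ)) ≠ 0 := by
  classical
  obtain ⟨hε, heq, hbd, hprop⟩ := harr
  set C : Subgroup Γ := Subgroup.centralizer (Λ : Set Γ) with hC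
  -- choose the defect constants
  choose c hc using hbd
  have hεε : ∀ x : H, ε • ε • x = x := by
    intro x
    rcases hε with h | h <;> simp [h, smul_smul]
  have hεnorm : ‖ε‖ = 1 := by rcases hε with h | h <;> simp [h]
  -- key uniform bound on ‖q γ‖ for γ in the centralizer
  set B : ℝ := K * ∑ s ∈ S, (c s + c s⁻¹) with hB
  have hbound : ∀ γ ∈ C, ‖q γ‖ ≤ B := by
    intro γ hγ
    have hcomm : ∀ s ∈ S, s * γ = γ * s := fun s hs =>
      (Subgroup.mem_centralizer_iff.mp hγ) s (hSΛ s hs)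
    refine (hgap (q γ)).trans ?_
    rw [hB]
    refine mul_le_mul_of_nonneg_left (Finset.sum_le_sum ?_) hK.le
    intro s hs
    -- ‖π s (q γ) - q (s*γ)‖ ≤ c s
    have h1 : ‖q (s * γ) - π s (q γ)‖ ≤ c s := hc s γ
    -- ‖q (γ*s) - q γ‖ ≤ c s⁻¹
    have h2 : ‖q (γ * s) - q γ‖ ≤ c s⁻¹ := by
      have h3 : ‖q (s⁻¹ * γ⁻¹) - π s⁻¹ (q γ⁻¹)‖ ≤ c s⁻¹ := hc s⁻¹ γ⁻¹
      have h4 : ‖π (γ * s) (q (s⁻¹ * γ⁻¹)) - π (γ * s) (π s⁻¹ (q γ⁻¹))‖ ≤ c s⁻¹ := by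
        rw [← map_sub, (π (γ * s)).norm_map]; exact h3
      have e1 : π (γ * s) (q (s⁻¹ * γ⁻¹)) = ε • q (γ * s) := by
        have := heq (γ * s)
        rwa [mul_inv_rev] at this
      have e2 : π (γ * s) (π s⁻¹ (q γ⁻¹)) = ε • q γ := by
        have step : π (γ * s) (π s⁻¹ (q γ⁻¹)) = (π (γ * s) * π s⁻¹) (q γ⁻¹) := rfl
        rw [step, ← map_mul, mul_inv_cancel_right, heq γ]
      calc ‖q (γ * s) - q γ‖ = ‖ε • (q (γ * s) - q γ)‖ := by
            rw [norm_smul, hεnorm, one_mul]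
        _ = ‖π (γ * s) (q (s⁻¹ * γ⁻¹)) - π (γ * s) (π s⁻¹ (q γ⁻¹))‖ := by
            rw [e1, e2, smul_sub]
        _ ≤ c s⁻¹ := h4
    calc ‖π s (q γ) - q γ‖
        ≤ ‖π s (q γ) - q (s * γ)‖ + ‖q (s * γ) - q γ‖ := norm_sub_le_norm_sub_add_norm_sub _ _ _
      _ = ‖q (s * γ) - π s (q γ)‖ + ‖q (γ * s) - q γ‖ := by rw [norm_sub_rev, hcomm s hs]
      _ ≤ c s + c s⁻¹ := add_le_add h1 h2
  -- apply properness with constant max B 1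
  obtain ⟨F, S', T, hFG, hcov⟩ := hprop (max B 1) (lt_of_lt_of_le one_pos (le_max_right _ _))
  -- index type for the coset cover of the centralizer
  set ι := Subgroup Γ × Γ × Γ
  set s : Finset ι := F ×ˢ S' ×ˢ T with hs
  set Hsub : ι → Subgroup C := fun i =>
    ((i.1.map (MulAut.conj i.2.1).toMonoidHom).subgroupOf C) with hHsub
  set Q : ι → C → Prop := fun i δ => ∃ σ ∈ i.1, ((δ : Γ))⁻¹ = i.2.1 * σ * i.2.2 with hQ
  set g : ι → C := fun i => if hex : ∃ δ : C, Q i δ then hex.choose else 1 with hg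
  have hcover : ⋃ i ∈ s, g i • (Hsub i : Set C) = Set.univ := by
    rw [Set.eq_univ_iff_forall]
    intro δ
    have hδinv : (δ : Γ)⁻¹ ∈ C := by
      have := inv_mem δ.2; simpa using this
    have hqδ : ‖q ((δ : Γ))⁻¹‖ ≤ max B 1 := (hbound _ hδinv).trans (le_max_left _ _)
    obtain ⟨Sg, hSgF, h, hh, k, hk, σ, hσ, hδeq⟩ := hcov _ hqδ
    set i : ι := (Sg, h, k) with hi
    have his : i ∈ s := by
      rw [hs]
      exact Finset.mem_product.mpr ⟨hSgF, Finset.mem_product.mpr ⟨hh, hk⟩⟩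
    have hQi : Q i δ := ⟨σ, hσ, hδeq⟩
    have hex : ∃ δ' : C, Q i δ' := ⟨δ, hQi⟩
    have hg_eq : g i = hex.choose := dif_pos hex
    obtain ⟨σ₀, hσ₀, hδ₀eq⟩ := hex.choose_spec
    simp only [Set.mem_iUnion]
    refine ⟨i, his, ?_⟩
    rw [mem_leftCoset_iff]
    rw [hg_eq]
    show ((hex.choose)⁻¹ * δ) ∈ Hsub i
    rw [Subgroup.mem_subgroupOf]
    refine ⟨σ₀ * σ⁻¹, mul_mem hσ₀ (inv_mem hσ), ?_⟩
    have hδ : (δ : Γ) = (h * σ * k)⁻¹ := by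
      rw [← hδeq]; simp
    have hδ₀ : (hex.choose : Γ) = (h * σ₀ * k)⁻¹ := by
      rw [← hδ₀eq]; simp
    push_cast
    rw [hδ, hδ₀]
    simp [MulAut.conj_apply, mul_assoc, hi]
  obtain ⟨i, his, hfin⟩ := Subgroup.exists_finiteIndex_of_leftCoset_cover hcover
  rw [hs] at his
  obtain ⟨h1, -⟩ := Finset.mem_product.mp his
  exact ⟨i.2.1, i.1, hFG h1, hfin.index_ne_zero⟩
end

section
/- Let K be a countable group and L ◁ K a normal subgroup, and let Q = K/L be the quotient group with quotient homomorphism p : K → Q. Suppose Q admits a proper array r : Q → ℓ²(Q) with respect to the left regular representation of Q (i.e. an array relative to the trivial family, so that {x ∈ Q : ‖r(x)‖ ≤ C} is finite for all C > 0). Then K admits an array relative to the family {L} into ℓ²(Q) with respect to the representation π̃ of K defined by π̃_k := λ_Q(p(k)); in fact k ↦ r(p(k)) is such an array. -/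
/-- A *proper array* (array relative to the trivial family): (anti-)symmetric, finite
equivariance defects, and all sublevel sets `{γ : ‖r γ‖ ≤ C}` finite. -/
def IsProperArray {Γ H : Type*} [Group Γ] [NormedAddCommGroup H] [InnerProductSpace ℂ H]
    (π : Γ →* (H ≃ₗᵢ[ℂ] H)) (ε : ℝ) (r : Γ → H) : Prop :=
  (ε = 1 ∨ ε = -1) ∧
  (∀ γ : Γ, π γ (r γ⁻¹) = ε • r γ) ∧
  (∀ γ : Γ, ∃ C : ℝ, ∀ δ : Γ, ‖r (γ * δ) - π γ (r δ)‖ ≤ C) ∧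
  (∀ C : ℝ, 0 < C → {γ : Γ | ‖r γ‖ ≤ C}.Finite)

/-- if `Q = K ⧸ L` admits a proper array `r` into `ℓ²(Q)` for its left regular
representation, then `k ↦ r(p(k))` is an array on `K` relative to the family `{L}` into
`ℓ²(Q)` with respect to the representation `k ↦ λ_Q(p(k))`. -/
theorem isRelativeArray_of_quotient_properArray
    {K : Type*} [Group K] [Countable K] (L : Subgroup K) [L.Normal]
    (lamQ : K ⧸ L →* (lp (fun _ : K ⧸ L => ℂ) 2 ≃ₗᵢ[ℂ] lp (fun _ : K ⧸ L => ℂ) 2))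
    (hreg : ∀ (g : K ⧸ L) (ξ : lp (fun _ : K ⧸ L => ℂ) 2) (x : K ⧸ L),
      lamQ g ξ x = ξ (g⁻¹ * x))
    (r : K ⧸ L → lp (fun _ : K ⧸ L => ℂ) 2) (ε : ℝ)
    (harr : IsProperArray lamQ ε r) :
    IsRelativeArray (lamQ.comp (QuotientGroup.mk' L)) {L} ε
      (fun k : K => r (QuotientGroup.mk' L k)) := by
  obtain ⟨hε, hsym, hbd, hprop⟩ := harr
  refine ⟨hε, ?_, ?_, ?_⟩
  · intro γ
    simpa using hsym (QuotientGroup.mk' L γ)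
  · intro γ
    obtain ⟨C, hC⟩ := hbd (QuotientGroup.mk' L γ)
    exact ⟨C, fun δ => by simpa using hC (QuotientGroup.mk' L δ)⟩
  · intro C hC
    classical
    obtain hfin := hprop C hC
    refine ⟨{L}, (hfin.toFinset.image Quotient.out), {1}, by simp, ?_⟩
    intro γ hγ
    refine ⟨L, Finset.mem_singleton_self L, (QuotientGroup.mk' L γ : K ⧸ L).out, ?_,
      1, Finset.mem_singleton_self 1, ((QuotientGroup.mk' L γ : K ⧸ L).out)⁻¹ * γ, ?_, by group⟩
    · exact Finset.mem_image_of_mem _ (hfin.mem_toFinset.mpr hγ)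
    · rw [← QuotientGroup.eq]
      exact QuotientGroup.out_eq' _
end

section
/- Let Γ₁ and Γ₂ be countable groups such that each Γ_i admits a proper array into ℓ²(Γ_i) with respect to its left regular representation (i.e. an array relative to the trivial family). Then the product group Γ₁ × Γ₂ admits an array into ℓ²(Γ₁ × Γ₂), with respect to the left regular representation of Γ₁ × Γ₂, which is proper relative to the family consisting of the two subgroups Γ₁ × {e} and {e} × Γ₂. -/
open scoped ENNReal

section ArrayHelpers
variable {Γ₁ Γ₂ : Type*}



lemma two_toReal_pos' : (0:ℝ) < (2 : ℝ≥0∞).toReal := by norm_num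

lemma memℓp_l2tp (ξ : lp (fun _ : Γ₁ => ℂ) 2) (η : lp (fun _ : Γ₂ => ℂ) 2) :
    Memℓp (fun x : Γ₁ × Γ₂ => ξ x.1 * η x.2) 2 := by
  apply memℓp_gen
  have h1 := (lp.hasSum_norm two_toReal_pos' ξ).summable
  have h2 := (lp.hasSum_norm two_toReal_pos' η).summable
  have hs := h1.mul_of_nonneg h2 (fun i => Real.rpow_nonneg (norm_nonneg _) _)
      (fun i => Real.rpow_nonneg (norm_nonneg _) _)
  exact hs.congr fun x => by
    rw [norm_mul, Real.mul_rpow (norm_nonneg _) (norm_nonneg _)]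

def l2tp (ξ : lp (fun _ : Γ₁ => ℂ) 2) (η : lp (fun _ : Γ₂ => ℂ) 2) :
    lp (fun _ : Γ₁ × Γ₂ => ℂ) 2 :=
  ⟨fun x => ξ x.1 * η x.2, memℓp_l2tp ξ η⟩

@[simp] lemma l2tp_apply (ξ : lp (fun _ : Γ₁ => ℂ) 2) (η : lp (fun _ : Γ₂ => ℂ) 2)
    (x : Γ₁ × Γ₂) : l2tp ξ η x = ξ x.1 * η x.2 := rfl

lemma norm_l2tp (ξ : lp (fun _ : Γ₁ => ℂ) 2) (η : lp (fun _ : Γ₂ => ℂ) 2) :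
    ‖l2tp ξ η‖ = ‖ξ‖ * ‖η‖ := by
  have h1 := lp.hasSum_norm two_toReal_pos' ξ
  have h2 := lp.hasSum_norm two_toReal_pos' η
  have ht := lp.hasSum_norm two_toReal_pos' (l2tp ξ η)
  have hs := h1.summable.mul_of_nonneg h2.summable
      (fun i => Real.rpow_nonneg (norm_nonneg _) _)
      (fun i => Real.rpow_nonneg (norm_nonneg _) _)
  have hmul := h1.mul h2 hs
  have hrw : ∀ x : Γ₁ × Γ₂, ‖l2tp ξ η x‖ ^ (2 : ℝ≥0∞).toReal
      = ‖ξ x.1‖ ^ (2 : ℝ≥0∞).toReal * ‖η x.2‖ ^ (2 : ℝ≥0∞).toReal := fun x => by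
    rw [l2tp_apply, norm_mul, Real.mul_rpow (norm_nonneg _) (norm_nonneg _)]
  rw [funext hrw] at ht
  have key := ht.unique hmul
  rw [← Real.mul_rpow (norm_nonneg _) (norm_nonneg _)] at key
  exact Real.rpow_left_injOn (by norm_num) (norm_nonneg _)
    (mul_nonneg (norm_nonneg _) (norm_nonneg _)) key



lemma l2tp_sub_left (ξ ξ' : lp (fun _ : Γ₁ => ℂ) 2) (η : lp (fun _ : Γ₂ => ℂ) 2) :
    l2tp (ξ - ξ') η = l2tp ξ η - l2tp ξ' η := by
  refine lp.ext (funext fun x => ?_)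
  simp only [lp.coeFn_sub, Pi.sub_apply, l2tp_apply, sub_mul]

lemma l2tp_sub_right (ξ : lp (fun _ : Γ₁ => ℂ) 2) (η η' : lp (fun _ : Γ₂ => ℂ) 2) :
    l2tp ξ (η - η') = l2tp ξ η - l2tp ξ η' := by
  refine lp.ext (funext fun x => ?_)
  simp only [lp.coeFn_sub, Pi.sub_apply, l2tp_apply, mul_sub]

lemma l2tp_smul_smul (c d : ℝ) (ξ : lp (fun _ : Γ₁ => ℂ) 2) (η : lp (fun _ : Γ₂ => ℂ) 2) :
    l2tp (c • ξ) (d • η) = (c * d) • l2tp ξ η := by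
  refine lp.ext (funext fun x => ?_)
  simp only [lp.coeFn_smul, Pi.smul_apply, l2tp_apply, Complex.real_smul]
  push_cast
  ring

lemma max_inv_mul_eq_min {x y : ℝ} (hx : 0 ≤ x) (hy : 0 ≤ y) :
    (max x y)⁻¹ * (x * y) = min x y := by
  rcases le_total x y with h | h
  · rw [max_eq_right h, min_eq_left h]
    rcases eq_or_lt_of_le hy with h0 | h0
    · have hx0 : x = 0 := le_antisymm (h.trans h0.symm.le) hx
      simp [hx0]
    · rw [mul_comm x y, ← mul_assoc, inv_mul_cancel₀ h0.ne', one_mul]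
  · rw [max_eq_left h, min_eq_right h]
    rcases eq_or_lt_of_le hx with h0 | h0
    · have hy0 : y = 0 := le_antisymm (h.trans h0.symm.le) hy
      simp [hy0]
    · rw [← mul_assoc, inv_mul_cancel₀ h0.ne', one_mul]

variable [Group Γ₁] [Group Γ₂]

lemma lam_l2tp
    (lam₁ : Γ₁ →* (lp (fun _ : Γ₁ => ℂ) 2 ≃ₗᵢ[ℂ] lp (fun _ : Γ₁ => ℂ) 2))
    (hreg₁ : ∀ (g : Γ₁) (ξ : lp (fun _ : Γ₁ => ℂ) 2) (x : Γ₁), lam₁ g ξ x = ξ (g⁻¹ * x))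
    (lam₂ : Γ₂ →* (lp (fun _ : Γ₂ => ℂ) 2 ≃ₗᵢ[ℂ] lp (fun _ : Γ₂ => ℂ) 2))
    (hreg₂ : ∀ (g : Γ₂) (ξ : lp (fun _ : Γ₂ => ℂ) 2) (x : Γ₂), lam₂ g ξ x = ξ (g⁻¹ * x))
    (lam : (Γ₁ × Γ₂) →* (lp (fun _ : Γ₁ × Γ₂ => ℂ) 2 ≃ₗᵢ[ℂ] lp (fun _ : Γ₁ × Γ₂ => ℂ) 2))
    (hreg : ∀ (g : Γ₁ × Γ₂) (ξ : lp (fun _ : Γ₁ × Γ₂ => ℂ) 2) (x : Γ₁ × Γ₂),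
      lam g ξ x = ξ (g⁻¹ * x))
    (g : Γ₁ × Γ₂) (ξ : lp (fun _ : Γ₁ => ℂ) 2) (η : lp (fun _ : Γ₂ => ℂ) 2) :
    lam g (l2tp ξ η) = l2tp (lam₁ g.1 ξ) (lam₂ g.2 η) := by
  refine lp.ext (funext fun x => ?_)
  rw [hreg g _ x, l2tp_apply, l2tp_apply, hreg₁, hreg₂]
  rfl

lemma lam_rsmul
    (lam : (Γ₁ × Γ₂) →* (lp (fun _ : Γ₁ × Γ₂ => ℂ) 2 ≃ₗᵢ[ℂ] lp (fun _ : Γ₁ × Γ₂ => ℂ) 2))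
    (hreg : ∀ (g : Γ₁ × Γ₂) (ξ : lp (fun _ : Γ₁ × Γ₂ => ℂ) 2) (x : Γ₁ × Γ₂),
      lam g ξ x = ξ (g⁻¹ * x))
    (g : Γ₁ × Γ₂) (c : ℝ) (ξ : lp (fun _ : Γ₁ × Γ₂ => ℂ) 2) :
    lam g (c • ξ) = c • lam g ξ := by
  refine lp.ext (funext fun x => ?_)
  rw [hreg g _ x, lp.coeFn_smul, Pi.smul_apply, lp.coeFn_smul, Pi.smul_apply, hreg g ξ x]



lemma lp_norm_rsmul1 (c : ℝ) (v : lp (fun _ : Γ₁ => ℂ) 2) : ‖c • v‖ = |c| * ‖v‖ := by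
  rw [lp.norm_const_smul (by norm_num : (2 : ℝ≥0∞) ≠ 0) v, Real.norm_eq_abs]
lemma lp_norm_rsmul2 (c : ℝ) (v : lp (fun _ : Γ₂ => ℂ) 2) : ‖c • v‖ = |c| * ‖v‖ := by
  rw [lp.norm_const_smul (by norm_num : (2 : ℝ≥0∞) ≠ 0) v, Real.norm_eq_abs]

lemma lp_norm_rsmul (c : ℝ) (v : lp (fun _ : Γ₁ × Γ₂ => ℂ) 2) : ‖c • v‖ = |c| * ‖v‖ := by
  rw [lp.norm_const_smul (by norm_num : (2 : ℝ≥0∞) ≠ 0) v, Real.norm_eq_abs]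

lemma key_bound (a a' : lp (fun _ : Γ₁ => ℂ) 2) (b b' : lp (fun _ : Γ₂ => ℂ) 2)
    {C₁ C₂ : ℝ} (h1 : ‖a - a'‖ ≤ C₁) (h2 : ‖b - b'‖ ≤ C₂) :
    ‖(max ‖a‖ ‖b‖)⁻¹ • l2tp a b - (max ‖a'‖ ‖b'‖)⁻¹ • l2tp a' b'‖ ≤
      4*C₁ + 5*C₂ + 2 + C₁*C₁ + 3*C₁*C₂ := by
  have hC₁0 : 0 ≤ C₁ := (norm_nonneg _).trans h1
  have hC₂0 : 0 ≤ C₂ := (norm_nonneg _).trans h2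
  have hMnn : 0 ≤ max ‖a‖ ‖b‖ := le_trans (norm_nonneg a) (le_max_left _ _)
  have hM'nn : 0 ≤ max ‖a'‖ ‖b'‖ := le_trans (norm_nonneg a') (le_max_left _ _)
  have hA : |‖a‖ - ‖a'‖| ≤ C₁ := (abs_norm_sub_norm_le a a').trans h1
  have hB : |‖b‖ - ‖b'‖| ≤ C₂ := (abs_norm_sub_norm_le b b').trans h2
  have hA1 := (abs_le.1 hA).1
  have hA2 := (abs_le.1 hA).2
  have hB1 := (abs_le.1 hB).1
  have hB2 := (abs_le.1 hB).2
  have hMM' : |max ‖a‖ ‖b‖ - max ‖a'‖ ‖b'‖| ≤ C₁ + C₂ :=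
    (abs_max_sub_max_le_max _ _ _ _).trans
      (max_le (hA.trans (by linarith)) (hB.trans (by linarith)))
  have hMM'1 := (abs_le.1 hMM').1
  have hMM'2 := (abs_le.1 hMM').2
  rcases le_total (max ‖a‖ ‖b‖) (C₁ + C₂ + 1) with hM | hM
  · -- small max case
    have hle := norm_sub_le ((max ‖a‖ ‖b‖)⁻¹ • l2tp a b) ((max ‖a'‖ ‖b'‖)⁻¹ • l2tp a' b')
    rw [lp_norm_rsmul, lp_norm_rsmul, norm_l2tp, norm_l2tp,
      abs_of_nonneg (inv_nonneg.2 hMnn), abs_of_nonneg (inv_nonneg.2 hM'nn),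
      max_inv_mul_eq_min (norm_nonneg a) (norm_nonneg b),
      max_inv_mul_eq_min (norm_nonneg a') (norm_nonneg b')] at hle
    have m1 : min ‖a‖ ‖b‖ ≤ max ‖a‖ ‖b‖ := (min_le_left _ _).trans (le_max_left _ _)
    have m2 : min ‖a'‖ ‖b'‖ ≤ ‖b'‖ := min_le_right _ _
    have m3 : ‖b‖ ≤ max ‖a‖ ‖b‖ := le_max_right _ _
    nlinarith
  · -- large max case
    have hMpos : 0 < max ‖a‖ ‖b‖ := lt_of_lt_of_le (by linarith) hM
    have hM'pos : 0 < max ‖a'‖ ‖b'‖ := by linarith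
    have hM'1 : 1 ≤ max ‖a'‖ ‖b'‖ := by linarith
    have hdec : (max ‖a‖ ‖b‖)⁻¹ • l2tp a b - (max ‖a'‖ ‖b'‖)⁻¹ • l2tp a' b' =
        (max ‖a‖ ‖b‖)⁻¹ • l2tp (a - a') b + (max ‖a‖ ‖b‖)⁻¹ • l2tp a' (b - b')
          + ((max ‖a‖ ‖b‖)⁻¹ - (max ‖a'‖ ‖b'‖)⁻¹) • l2tp a' b' := by
      rw [l2tp_sub_left, l2tp_sub_right, smul_sub, smul_sub, sub_smul]
      abel
    rw [hdec]
    have tri : ‖(max ‖a‖ ‖b‖)⁻¹ • l2tp (a - a') b + (max ‖a‖ ‖b‖)⁻¹ • l2tp a' (b - b')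
          + ((max ‖a‖ ‖b‖)⁻¹ - (max ‖a'‖ ‖b'‖)⁻¹) • l2tp a' b'‖ ≤
        ‖(max ‖a‖ ‖b‖)⁻¹ • l2tp (a - a') b‖ + ‖(max ‖a‖ ‖b‖)⁻¹ • l2tp a' (b - b')‖
          + ‖((max ‖a‖ ‖b‖)⁻¹ - (max ‖a'‖ ‖b'‖)⁻¹) • l2tp a' b'‖ := by
      apply norm_add₃_le
    rw [lp_norm_rsmul, lp_norm_rsmul, lp_norm_rsmul, norm_l2tp, norm_l2tp, norm_l2tp,
      abs_of_nonneg (inv_nonneg.2 hMnn)] at tri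
    -- term 1
    have t1 : (max ‖a‖ ‖b‖)⁻¹ * (‖a - a'‖ * ‖b‖) ≤ C₁ := by
      rw [inv_mul_le_iff₀ hMpos]
      calc ‖a - a'‖ * ‖b‖ ≤ C₁ * max ‖a‖ ‖b‖ :=
            mul_le_mul h1 (le_max_right _ _) (norm_nonneg _) hC₁0
        _ = max ‖a‖ ‖b‖ * C₁ := mul_comm _ _
    -- term 2
    have ha' : ‖a'‖ ≤ max ‖a‖ ‖b‖ * (1 + C₁) := by
      have h₁ : ‖a'‖ ≤ max ‖a‖ ‖b‖ + C₁ := by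
        have : ‖a‖ ≤ max ‖a‖ ‖b‖ := le_max_left _ _
        linarith
      nlinarith
    have e1 : (max ‖a‖ ‖b‖)⁻¹ * ‖a'‖ ≤ 1 + C₁ := by
      rw [inv_mul_le_iff₀ hMpos]; linarith [ha']
    have t2 : (max ‖a‖ ‖b‖)⁻¹ * (‖a'‖ * ‖b - b'‖) ≤ (1 + C₁) * C₂ := by
      rw [inv_mul_le_iff₀ hMpos]
      calc ‖a'‖ * ‖b - b'‖ ≤ (max ‖a‖ ‖b‖ * (1 + C₁)) * C₂ :=
            mul_le_mul ha' h2 (norm_nonneg _) (by positivity)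
        _ = max ‖a‖ ‖b‖ * ((1 + C₁) * C₂) := by ring
    -- term 3
    have e2 : (max ‖a'‖ ‖b'‖)⁻¹ * ‖b'‖ ≤ 1 := by
      rw [inv_mul_le_iff₀ hM'pos, mul_one]; exact le_max_right _ _
    have hinv : (max ‖a‖ ‖b‖)⁻¹ - (max ‖a'‖ ‖b'‖)⁻¹
        = (max ‖a'‖ ‖b'‖ - max ‖a‖ ‖b‖) * ((max ‖a‖ ‖b‖)⁻¹ * (max ‖a'‖ ‖b'‖)⁻¹) := by
      have hh := mul_inv_cancel₀ hMpos.ne'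
      have hh' := mul_inv_cancel₀ hM'pos.ne'
      linear_combination (max ‖a'‖ ‖b'‖)⁻¹ * hh - (max ‖a‖ ‖b‖)⁻¹ * hh'
    have t3 : |(max ‖a‖ ‖b‖)⁻¹ - (max ‖a'‖ ‖b'‖)⁻¹| * (‖a'‖ * ‖b'‖)
        ≤ (C₁ + C₂) * ((1 + C₁) * 1) := by
      have heq : |(max ‖a‖ ‖b‖)⁻¹ - (max ‖a'‖ ‖b'‖)⁻¹| * (‖a'‖ * ‖b'‖)
          = |max ‖a'‖ ‖b'‖ - max ‖a‖ ‖b‖|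
            * (((max ‖a‖ ‖b‖)⁻¹ * ‖a'‖) * ((max ‖a'‖ ‖b'‖)⁻¹ * ‖b'‖)) := by
        rw [hinv, abs_mul, abs_of_nonneg (mul_nonneg (inv_nonneg.2 hMnn) (inv_nonneg.2 hM'nn))]
        ring
      rw [heq]
      have habs' : |max ‖a'‖ ‖b'‖ - max ‖a‖ ‖b‖| ≤ C₁ + C₂ := by
        rw [abs_sub_comm]; exact hMM'
      refine mul_le_mul habs' ?_ (by positivity) (by linarith)
      exact mul_le_mul e1 e2 (by positivity) (by linarith)
    refine le_trans tri ?_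
    have hcc : 0 ≤ C₁ * C₂ := mul_nonneg hC₁0 hC₂0
    linarith [t1, t2, t3]
  done
end ArrayHelpers




/-- if `Γ₁` and `Γ₂` each admit proper arrays into their left regular
representations, then `Γ₁ × Γ₂` admits an array into `ℓ²(Γ₁ × Γ₂)`, with respect to its left
regular representation, proper relative to the family `{Γ₁ × {e}, {e} × Γ₂}`. -/
theorem exists_relativeArray_of_product
    {Γ₁ Γ₂ : Type*} [Group Γ₁] [Group Γ₂] [Countable Γ₁] [Countable Γ₂]
    (lam₁ : Γ₁ →* (lp (fun _ : Γ₁ => ℂ) 2 ≃ₗᵢ[ℂ] lp (fun _ : Γ₁ => ℂ) 2))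
    (hreg₁ : ∀ (g : Γ₁) (ξ : lp (fun _ : Γ₁ => ℂ) 2) (x : Γ₁), lam₁ g ξ x = ξ (g⁻¹ * x))
    (lam₂ : Γ₂ →* (lp (fun _ : Γ₂ => ℂ) 2 ≃ₗᵢ[ℂ] lp (fun _ : Γ₂ => ℂ) 2))
    (hreg₂ : ∀ (g : Γ₂) (ξ : lp (fun _ : Γ₂ => ℂ) 2) (x : Γ₂), lam₂ g ξ x = ξ (g⁻¹ * x))
    (h₁ : ∃ (ε₁ : ℝ) (r₁ : Γ₁ → lp (fun _ : Γ₁ => ℂ) 2), IsProperArray lam₁ ε₁ r₁)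
    (h₂ : ∃ (ε₂ : ℝ) (r₂ : Γ₂ → lp (fun _ : Γ₂ => ℂ) 2), IsProperArray lam₂ ε₂ r₂)
    (lam : (Γ₁ × Γ₂) →* (lp (fun _ : Γ₁ × Γ₂ => ℂ) 2 ≃ₗᵢ[ℂ] lp (fun _ : Γ₁ × Γ₂ => ℂ) 2))
    (hreg : ∀ (g : Γ₁ × Γ₂) (ξ : lp (fun _ : Γ₁ × Γ₂ => ℂ) 2) (x : Γ₁ × Γ₂),
      lam g ξ x = ξ (g⁻¹ * x)) :
    ∃ (ε : ℝ) (r : Γ₁ × Γ₂ → lp (fun _ : Γ₁ × Γ₂ => ℂ) 2),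
      IsRelativeArray lam
        {(⊤ : Subgroup Γ₁).prod (⊥ : Subgroup Γ₂), (⊥ : Subgroup Γ₁).prod (⊤ : Subgroup Γ₂)}
        ε r := by
  classical
  obtain ⟨ε₁, r₁, hsgn₁, hsym₁, hdef₁, hprop₁⟩ := h₁
  obtain ⟨ε₂, r₂, hsgn₂, hsym₂, hdef₂, hprop₂⟩ := h₂
  have habs₁ : |ε₁| = 1 := by rcases hsgn₁ with h | h <;> rw [h] <;> norm_num
  have habs₂ : |ε₂| = 1 := by rcases hsgn₂ with h | h <;> rw [h] <;> norm_num
  have hninv₁ : ∀ x : Γ₁, ‖r₁ x⁻¹‖ = ‖r₁ x‖ := by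
    intro x
    have h := congrArg norm (hsym₁ x)
    rw [LinearIsometryEquiv.norm_map] at h
    refine h.trans ((congrArg norm (RCLike.real_smul_eq_coe_smul (K := ℂ) ε₁ (r₁ x))).trans ?_)
    rw [norm_smul, RCLike.norm_ofReal, habs₁, one_mul]
  have hninv₂ : ∀ x : Γ₂, ‖r₂ x⁻¹‖ = ‖r₂ x‖ := by
    intro x
    have h := congrArg norm (hsym₂ x)
    rw [LinearIsometryEquiv.norm_map] at h
    refine h.trans ((congrArg norm (RCLike.real_smul_eq_coe_smul (K := ℂ) ε₂ (r₂ x))).trans ?_)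
    rw [norm_smul, RCLike.norm_ofReal, habs₂, one_mul]
  refine ⟨ε₁ * ε₂,
    fun γ => (max ‖r₁ γ.1‖ ‖r₂ γ.2‖)⁻¹ • l2tp (r₁ γ.1) (r₂ γ.2), ?_, ?_, ?_, ?_⟩
  · rcases hsgn₁ with h | h <;> rcases hsgn₂ with h' | h' <;> rw [h, h'] <;> norm_num
  · -- symmetry
    intro γ
    show lam γ ((max ‖r₁ (γ⁻¹).1‖ ‖r₂ (γ⁻¹).2‖)⁻¹ • l2tp (r₁ (γ⁻¹).1) (r₂ (γ⁻¹).2)) = _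
    rw [show (γ⁻¹).1 = γ.1⁻¹ from rfl, show (γ⁻¹).2 = γ.2⁻¹ from rfl,
      hninv₁ γ.1, hninv₂ γ.2, lam_rsmul lam hreg,
      lam_l2tp lam₁ hreg₁ lam₂ hreg₂ lam hreg, hsym₁, hsym₂]
    erw [l2tp_smul_smul]
    exact smul_comm _ _ _
  · -- bounded defects
    intro γ
    obtain ⟨C₁, hC₁⟩ := hdef₁ γ.1
    obtain ⟨C₂, hC₂⟩ := hdef₂ γ.2
    refine ⟨4*C₁ + 5*C₂ + 2 + C₁*C₁ + 3*C₁*C₂, fun δ => ?_⟩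
    have e2 : lam γ ((max ‖r₁ δ.1‖ ‖r₂ δ.2‖)⁻¹ • l2tp (r₁ δ.1) (r₂ δ.2))
        = (max ‖lam₁ γ.1 (r₁ δ.1)‖ ‖lam₂ γ.2 (r₂ δ.2)‖)⁻¹
            • l2tp (lam₁ γ.1 (r₁ δ.1)) (lam₂ γ.2 (r₂ δ.2)) := by
      rw [lam_rsmul lam hreg, lam_l2tp lam₁ hreg₁ lam₂ hreg₂ lam hreg,
        LinearIsometryEquiv.norm_map, LinearIsometryEquiv.norm_map]
    show ‖(max ‖r₁ (γ.1 * δ.1)‖ ‖r₂ (γ.2 * δ.2)‖)⁻¹ • l2tp (r₁ (γ.1 * δ.1)) (r₂ (γ.2 * δ.2))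
        - lam γ ((max ‖r₁ δ.1‖ ‖r₂ δ.2‖)⁻¹ • l2tp (r₁ δ.1) (r₂ δ.2))‖ ≤ _
    rw [e2]
    exact key_bound _ _ _ _ (hC₁ δ.1) (hC₂ δ.2)
  · -- relative properness
    intro C hC
    obtain hF₁ := hprop₁ C hC
    obtain hF₂ := hprop₂ C hC
    refine ⟨{(⊤ : Subgroup Γ₁).prod (⊥ : Subgroup Γ₂), (⊥ : Subgroup Γ₁).prod (⊤ : Subgroup Γ₂)},
      hF₁.toFinset.image (fun x => (x, (1 : Γ₂))) ∪ hF₂.toFinset.image (fun y => ((1 : Γ₁), y)),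
      {1}, ?_, ?_⟩
    · intro s hs
      simp only [Finset.coe_insert, Finset.coe_singleton, Set.mem_insert_iff,
        Set.mem_singleton_iff] at hs
      rcases hs with h | h <;> simp [h]
    · intro γ hγ
      have hnorm : ‖(max ‖r₁ γ.1‖ ‖r₂ γ.2‖)⁻¹ • l2tp (r₁ γ.1) (r₂ γ.2)‖
          = min ‖r₁ γ.1‖ ‖r₂ γ.2‖ := by
        rw [lp_norm_rsmul, norm_l2tp,
          abs_of_nonneg (inv_nonneg.2 (le_trans (norm_nonneg _) (le_max_left _ _))),
          max_inv_mul_eq_min (norm_nonneg _) (norm_nonneg _)]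
      rw [hnorm] at hγ
      rcases min_le_iff.1 hγ with hcase | hcase
      · -- γ.1 in finite set; use {e} × Γ₂
        refine ⟨(⊥ : Subgroup Γ₁).prod (⊤ : Subgroup Γ₂), by simp, (γ.1, 1),
          Finset.mem_union_left _ (Finset.mem_image.2
            ⟨γ.1, hF₁.mem_toFinset.2 hcase, rfl⟩), 1, Finset.mem_singleton_self 1,
          (1, γ.2), Subgroup.mem_prod.2 ⟨Subgroup.mem_bot.2 rfl, Subgroup.mem_top _⟩, ?_⟩
        ext <;> simp
      · refine ⟨(⊤ : Subgroup Γ₁).prod (⊥ : Subgroup Γ₂), by simp, (1, γ.2),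
          Finset.mem_union_right _ (Finset.mem_image.2
            ⟨γ.2, hF₂.mem_toFinset.2 hcase, rfl⟩), 1, Finset.mem_singleton_self 1,
          (γ.1, 1), Subgroup.mem_prod.2 ⟨Subgroup.mem_top _, Subgroup.mem_bot.2 rfl⟩, ?_⟩
        ext <;> simp
end

section
/- Let Γ and A be countable groups, 𝒢 a family of subgroups of Γ, ρ : Γ → Aut(A) an action of Γ on A by group automorphisms, and M = A ⋊_ρ Γ the semidirect product. Let π : Γ → U(H) be a unitary representation and define π̃ : M → U(H) by π̃_{(a,γ)} := π_γ (this is a group homomorphism). If c : Γ → H is an array relative to 𝒢 with sign ε for π, then the map c̃ : M → H defined by c̃(a,γ) := c(γ) is an array relative to the family {A ⋊_ρ Σ : Σ ∈ 𝒢} with sign ε for π̃. -/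
/-- if `c : Γ → H` is an array relative to `G` for `π`, then
`c̃(a,γ) := c(γ)` is an array on the semidirect product `A ⋊_ρ Γ`, relative to the family
`{A ⋊_ρ Σ : Σ ∈ G}`, for the representation `π̃(a,γ) := π(γ)`. -/
theorem isRelativeArray_semidirectProduct
    {A Γ H : Type*} [Group A] [Group Γ] [Countable A] [Countable Γ]
    [NormedAddCommGroup H] [InnerProductSpace ℂ H]
    (ρ : Γ →* MulAut A) (G : Set (Subgroup Γ))
    (π : Γ →* (H ≃ₗᵢ[ℂ] H)) (ε : ℝ) (c : Γ → H)
    (harr : IsRelativeArray π G ε c) :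
    IsRelativeArray
      (π.comp (SemidirectProduct.rightHom : A ⋊[ρ] Γ →* Γ))
      ((fun Sg : Subgroup Γ =>
        Sg.comap (SemidirectProduct.rightHom : A ⋊[ρ] Γ →* Γ)) '' G)
      ε (fun m : A ⋊[ρ] Γ => c m.right) := by
  classical
  obtain ⟨hε, hsym, hbdd, hprop⟩ := harr
  refine ⟨hε, ?_, ?_, ?_⟩
  · intro m
    simpa using hsym m.right
  · intro m
    obtain ⟨C, hC⟩ := hbdd m.right
    exact ⟨C, fun n => by simpa using hC n.right⟩
  · intro C hCpos
    obtain ⟨F, S, T, hFG, hcov⟩ := hprop C hCpos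
    refine ⟨F.image (fun Sg => Sg.comap (SemidirectProduct.rightHom : A ⋊[ρ] Γ →* Γ)),
      S.image (fun h => (⟨1, h⟩ : A ⋊[ρ] Γ)),
      T.image (fun k => (⟨1, k⟩ : A ⋊[ρ] Γ)), ?_, ?_⟩
    · intro Sg' hSg'
      simp only [Finset.coe_image, Set.mem_image] at hSg' ⊢
      obtain ⟨Sg, hSg, rfl⟩ := hSg'
      exact ⟨Sg, hFG hSg, rfl⟩
    · intro m hm
      obtain ⟨Sg, hSgF, h, hhS, k, hkT, σ, hσ, hdec⟩ := hcov m.right hm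
      refine ⟨Sg.comap SemidirectProduct.rightHom, Finset.mem_image_of_mem _ hSgF,
        ⟨1, h⟩, Finset.mem_image_of_mem _ hhS,
        ⟨1, k⟩, Finset.mem_image_of_mem _ hkT,
        ⟨(ρ h)⁻¹ m.left, σ⟩, ?_, ?_⟩
      · simpa [Subgroup.mem_comap] using hσ
      · ext
        · simp [SemidirectProduct.mul_left]
        · simpa using hdec
end

section
/- Let Γ be a countable group, 𝒢 a family of subgroups of Γ, Λ a finite group, and ρ : Λ → Aut(Γ) an action of Λ on Γ by automorphisms; let M = Γ ⋊_ρ Λ and let λ denote the left regular representation of M on ℓ²(M). Let ι : ℓ²(Γ) → ℓ²(M) be the isometry given by ι(ξ)(γ,α) = ξ(γ) if α = e and 0 otherwise. If r : Γ → ℓ²(Γ) is an array relative to 𝒢 for the left regular representation of Γ, then the map r' : M → ℓ²(M) defined by r'(γ,α) := |Λ|^{-1/2} · Σ_{δ∈Λ} λ_{(e,δ)}( ι( r( ρ_{δ⁻¹}(γ) ) ) ) is an array on M, relative to the family 𝒢 regarded as subgroups of M via the embedding γ ↦ (γ,e), for the left regular representation of M. -/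
set_option maxHeartbeats 1000000 in
/-- averaging an array `r` relative to `G` on `Γ` over a finite group `Λ`
acting on `Γ` by automorphisms produces an array
`r'(γ,α) = |Λ|^{-1/2} Σ_{δ∈Λ} λ_{(e,δ)}(ι(r(ρ_{δ⁻¹}(γ))))` on `Γ ⋊_ρ Λ`, relative to the
family `G` viewed inside `Γ ⋊_ρ Λ` via `γ ↦ (γ,e)`, for the left regular representation. -/
theorem isRelativeArray_semidirect_finite
    {Γ Λ : Type*} [Group Γ] [Countable Γ] [Group Λ] [Fintype Λ]
    (ρ : Λ →* MulAut Γ) (G : Set (Subgroup Γ))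
    (lamG : Γ →* (lp (fun _ : Γ => ℂ) 2 ≃ₗᵢ[ℂ] lp (fun _ : Γ => ℂ) 2))
    (hregG : ∀ (g : Γ) (ξ : lp (fun _ : Γ => ℂ) 2) (x : Γ), lamG g ξ x = ξ (g⁻¹ * x))
    (lamM : (Γ ⋊[ρ] Λ) →*
      (lp (fun _ : Γ ⋊[ρ] Λ => ℂ) 2 ≃ₗᵢ[ℂ] lp (fun _ : Γ ⋊[ρ] Λ => ℂ) 2))
    (hregM : ∀ (g : Γ ⋊[ρ] Λ) (ξ : lp (fun _ : Γ ⋊[ρ] Λ => ℂ) 2) (x : Γ ⋊[ρ] Λ),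
      lamM g ξ x = ξ (g⁻¹ * x))
    (ι : lp (fun _ : Γ => ℂ) 2 →ₗᵢ[ℂ] lp (fun _ : Γ ⋊[ρ] Λ => ℂ) 2)
    (hι₁ : ∀ (ξ : lp (fun _ : Γ => ℂ) 2) (γ : Γ), ι ξ (⟨γ, 1⟩ : Γ ⋊[ρ] Λ) = ξ γ)
    (hι₂ : ∀ (ξ : lp (fun _ : Γ => ℂ) 2) (m : Γ ⋊[ρ] Λ), m.right ≠ 1 → ι ξ m = 0)
    (r : Γ → lp (fun _ : Γ => ℂ) 2) (ε : ℝ) (harr : IsRelativeArray lamG G ε r) :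
    IsRelativeArray lamM
      ((fun Sg : Subgroup Γ => Sg.map (SemidirectProduct.inl : Γ →* Γ ⋊[ρ] Λ)) '' G)
      ε
      (fun m : Γ ⋊[ρ] Λ =>
        (Real.sqrt (Fintype.card Λ))⁻¹ •
          ∑ δ : Λ, lamM (SemidirectProduct.inr δ) (ι (r ((ρ δ⁻¹) m.left)))) := by
  classical
  obtain ⟨hsign, heq, hbdd, hprop⟩ := harr
  set c : ℝ := (Real.sqrt (Fintype.card Λ))⁻¹ with hc
  have hsq : 0 < Real.sqrt (Fintype.card Λ) :=
    Real.sqrt_pos.2 (by exact_mod_cast Fintype.card_pos (α := Λ))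
  have hcpos : 0 < c := inv_pos.2 hsq
  -- real smul is complex smul
  have hRs : ∀ (t : ℝ) (v : lp (fun _ : Γ ⋊[ρ] Λ => ℂ) 2), t • v = (t : ℂ) • v := fun t v => by
    rw [← smul_one_smul ℂ t v, Complex.real_smul, mul_one]
  have hRsE : ∀ (t : ℝ) (v : lp (fun _ : Γ => ℂ) 2), t • v = (t : ℂ) • v := fun t v => by
    rw [← smul_one_smul ℂ t v, Complex.real_smul, mul_one]
  -- intertwining of inl with ι
  have hA : ∀ (g : Γ) (ξ : lp (fun _ : Γ => ℂ) 2),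
      lamM (SemidirectProduct.inl g) (ι ξ) = ι (lamG g ξ) := by
    intro g ξ
    apply lp.ext
    funext x
    rw [hregM]
    by_cases hx : x.right = 1
    · have hx' : x = (⟨x.left, 1⟩ : Γ ⋊[ρ] Λ) := by ext <;> simp [hx]
      have h1 : ((SemidirectProduct.inl g : Γ ⋊[ρ] Λ)⁻¹ * x) = (⟨g⁻¹ * x.left, 1⟩ : Γ ⋊[ρ] Λ) := by
        ext <;> simp [hx]
      rw [h1, hι₁, hx', hι₁, hregG]
    · have h2 : ((SemidirectProduct.inl g : Γ ⋊[ρ] Λ)⁻¹ * x).right ≠ 1 := by simpa using hx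
      rw [hι₂ _ _ h2, hι₂ _ _ hx]
  -- support of the δ-th term
  have hB : ∀ (δ : Λ) (ξ : lp (fun _ : Γ => ℂ) 2) (x : Γ ⋊[ρ] Λ), x.right ≠ δ →
      lamM (SemidirectProduct.inr δ) (ι ξ) x = 0 := by
    intro δ ξ x hx
    rw [hregM]
    apply hι₂
    simpa [eq_comm, inv_mul_eq_one] using hx
  have hmul : ∀ (a b : Γ ⋊[ρ] Λ) (ξ : lp (fun _ : Γ ⋊[ρ] Λ => ℂ) 2), lamM (a * b) ξ = lamM a (lamM b ξ) := by
    intro a b ξ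
    rw [map_mul]
    rfl
  -- key computation
  have hkey : ∀ (m : Γ ⋊[ρ] Λ) (δ : Λ) (ξ : lp (fun _ : Γ => ℂ) 2),
      lamM m (lamM (SemidirectProduct.inr δ) (ι ξ)) =
        lamM (SemidirectProduct.inr (m.right * δ))
          (ι (lamG ((ρ (m.right * δ)⁻¹) m.left) ξ)) := by
    intro m δ ξ
    rw [← hA, ← hmul, ← hmul]
    congr 2
    ext <;> simp
  refine ⟨hsign, ?_, ?_, ?_⟩
  · -- equivariance
    intro m
    dsimp only
    have hterm : ∀ δ : Λ,
        lamM m (lamM (SemidirectProduct.inr δ) (ι (r ((ρ δ⁻¹) (m⁻¹).left)))) =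
          (ε : ℂ) • lamM (SemidirectProduct.inr (m.right * δ))
            (ι (r ((ρ (m.right * δ)⁻¹) m.left))) := by
      intro δ
      rw [hkey]
      have h3 : (ρ δ⁻¹) (m⁻¹).left = (((ρ (m.right * δ)⁻¹) m.left))⁻¹ := by
        rw [SemidirectProduct.inv_left, ← MulAut.mul_apply, ← map_mul, ← mul_inv_rev]
        exact map_inv _ _
      rw [h3, heq]
      erw [hRsE]
      rw [map_smul, map_smul]
    rw [hRs, map_smul, map_sum]
    simp only [hterm]
    rw [← Finset.smul_sum]
    rw [Fintype.sum_equiv (Equiv.mulLeft m.right)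
      (fun β => lamM (SemidirectProduct.inr (m.right * β)) (ι (r ((ρ (m.right * β)⁻¹) m.left))))
      (fun β => lamM (SemidirectProduct.inr β) (ι (r ((ρ β⁻¹) m.left)))) (fun β => rfl)]
    erw [hRs ε, hRs c]
    rw [smul_comm]
    rfl
  · -- bounded difference
    intro m
    choose Cf hCf using hbdd
    refine ⟨c * ∑ β : Λ, Cf ((ρ β⁻¹) m.left), ?_⟩
    intro n
    dsimp only
    have hterm : ∀ δ : Λ,
        lamM m (lamM (SemidirectProduct.inr δ) (ι (r ((ρ δ⁻¹) n.left)))) =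
          lamM (SemidirectProduct.inr (m.right * δ))
            (ι (lamG ((ρ (m.right * δ)⁻¹) m.left)
              (r ((ρ (m.right * δ)⁻¹) ((ρ m.right) n.left))))) := by
      intro δ
      rw [hkey]
      congr 3
      rw [← MulAut.mul_apply, ← map_mul, mul_inv_rev, inv_mul_cancel_right]
    have hleft : ∀ β : Λ, (ρ β⁻¹) ((m * n).left) =
        (ρ β⁻¹) m.left * (ρ β⁻¹) ((ρ m.right) n.left) := by
      intro β
      rw [SemidirectProduct.mul_left, map_mul]
    have hdiff :
        ((c • ∑ δ : Λ, lamM (SemidirectProduct.inr δ) (ι (r ((ρ δ⁻¹) (m * n).left)))) -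
          lamM m (c • ∑ δ : Λ, lamM (SemidirectProduct.inr δ) (ι (r ((ρ δ⁻¹) n.left))))) =
        c • ∑ β : Λ, lamM (SemidirectProduct.inr β)
          (ι (r ((ρ β⁻¹) m.left * (ρ β⁻¹) ((ρ m.right) n.left)) -
            lamG ((ρ β⁻¹) m.left) (r ((ρ β⁻¹) ((ρ m.right) n.left))))) := by
      rw [hRs, hRs, hRs, map_smul, map_sum]
      simp only [hterm]
      rw [Fintype.sum_equiv (Equiv.mulLeft m.right)
        (fun β => lamM (SemidirectProduct.inr (m.right * β))
          (ι (lamG ((ρ (m.right * β)⁻¹) m.left) (r ((ρ (m.right * β)⁻¹) ((ρ m.right) n.left))))))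
        (fun β => lamM (SemidirectProduct.inr β)
          (ι (lamG ((ρ β⁻¹) m.left) (r ((ρ β⁻¹) ((ρ m.right) n.left)))))) (fun β => rfl)]
      rw [← smul_sub, ← Finset.sum_sub_distrib]
      congr 1
      refine Finset.sum_congr rfl fun β _ => ?_
      rw [hleft, ← map_sub, ← map_sub]
    rw [hdiff, norm_smul, Real.norm_eq_abs, abs_of_pos hcpos]
    refine mul_le_mul_of_nonneg_left ?_ hcpos.le
    refine le_trans (norm_sum_le _ _) (Finset.sum_le_sum fun β _ => ?_)
    rw [LinearIsometryEquiv.norm_map, LinearIsometry.norm_map]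
    exact hCf _ _
  · -- properness
    intro C hC
    obtain ⟨F, S, T, hF, hcov⟩ := hprop (C * Real.sqrt (Fintype.card Λ))
      (mul_pos hC hsq)
    refine ⟨F.image (fun Sg => Sg.map (SemidirectProduct.inl : Γ →* Γ ⋊[ρ] Λ)),
      S.image (fun g => (SemidirectProduct.inl g : Γ ⋊[ρ] Λ)),
      (T ×ˢ (Finset.univ : Finset Λ)).image (fun p => (⟨p.1, p.2⟩ : Γ ⋊[ρ] Λ)), ?_, ?_⟩
    · rw [Finset.coe_image]
      exact Set.image_mono hF
    · intro m hm
      dsimp only at hm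
      set v : Λ → lp (fun _ : Γ ⋊[ρ] Λ => ℂ) 2 := fun δ => lamM (SemidirectProduct.inr δ) (ι (r ((ρ δ⁻¹) m.left)))
        with hv
      have hv1 : v 1 = ι (r m.left) := by
        simp [hv]
        rfl
      have horth : ∀ δ : Λ, δ ≠ 1 → inner ℂ (v 1) (v δ) = 0 := by
        intro δ hδ
        rw [lp.inner_eq_tsum]
        have hz : ∀ x : Γ ⋊[ρ] Λ, inner ℂ (v 1 x) (v δ x) = 0 := by
          intro x
          by_cases hx : x.right = 1
          · rw [hB δ _ x (by rw [hx]; exact fun h => hδ h.symm), inner_zero_right]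
          · rw [hv1, hι₂ _ _ hx, inner_zero_left]
        simp only [hz]
        exact tsum_zero
      have hinner : inner ℂ (v 1) (∑ δ : Λ, v δ) = (‖v 1‖ : ℂ) ^ 2 := by
        rw [inner_sum]
        rw [Finset.sum_eq_single_of_mem 1 (Finset.mem_univ 1)
          (fun δ _ hδ => horth δ hδ)]
        exact inner_self_eq_norm_sq_to_K (𝕜 := ℂ) (v 1)
      have hle : ‖v 1‖ ≤ ‖∑ δ : Λ, v δ‖ := by
        by_cases h0 : ‖v 1‖ = 0
        · rw [h0]; exact norm_nonneg _
        · have h1 := norm_inner_le_norm (𝕜 := ℂ) (v 1) (∑ δ : Λ, v δ)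
          rw [hinner] at h1
          have h2 : ‖((‖v 1‖ : ℂ)) ^ 2‖ = ‖v 1‖ * ‖v 1‖ := by
            rw [norm_pow, Complex.norm_real, Real.norm_eq_abs,
              abs_of_nonneg (norm_nonneg _), sq]
          rw [h2] at h1
          exact le_of_mul_le_mul_left h1
            (lt_of_le_of_ne (norm_nonneg _) (Ne.symm h0))
      have hrm : ‖r m.left‖ ≤ C * Real.sqrt (Fintype.card Λ) := by
        have h3 : ‖r m.left‖ = ‖v 1‖ := by rw [hv1, LinearIsometry.norm_map]
        have h4 : c * ‖∑ δ : Λ, v δ‖ ≤ C := by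
          rw [norm_smul, Real.norm_eq_abs, abs_of_pos hcpos] at hm
          exact hm
        have h5 : ‖∑ δ : Λ, v δ‖ ≤ C * Real.sqrt (Fintype.card Λ) := by
          have := mul_le_mul_of_nonneg_left h4 hsq.le
          rwa [hc, ← mul_assoc, mul_inv_cancel₀ hsq.ne', one_mul, mul_comm] at this
        rw [h3]
        exact le_trans hle h5
      obtain ⟨Sg, hSg, h, hh, k, hk, σ, hσ, hfac⟩ := hcov m.left hrm
      refine ⟨Sg.map (SemidirectProduct.inl : Γ →* Γ ⋊[ρ] Λ),
        Finset.mem_image_of_mem _ hSg,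
        SemidirectProduct.inl h, Finset.mem_image_of_mem _ hh,
        (⟨k, m.right⟩ : Γ ⋊[ρ] Λ),
        Finset.mem_image.mpr ⟨(k, m.right), Finset.mem_product.mpr ⟨hk, Finset.mem_univ _⟩, rfl⟩,
        SemidirectProduct.inl σ, Subgroup.mem_map_of_mem _ hσ, ?_⟩
      ext
      · simp [hfac]
      · simp
end
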